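/- arXiv:math/0401098 — 9 statements merged into one kernel-verified Lean document; each statement's English description precedes it below -/
import Mathlib

section
/- Let k be a field and let A be a locally finite ℕ-graded k-algebra with A_{≥1} ≠ 0. If A is projectively simple, then A is a finitely generated k-algebra. -/
/-!
STATEMENT 0: Let `k` be a field and `A` a locally finite ℕ-graded `k`-algebra with
`A_{≥1} ≠ 0`.  If `A` is projectively simple then `A` is a finitely generated `k`-algebra.
-/

/-- The underlying `k`-submodule of a two-sided ideal of a `k`-algebra. -/
def TwoSidedIdeal.ksub (k : Type*) {A : Type*} [CommSemiring k] [Ring A] [Algebra k A]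
    (I : TwoSidedIdeal A) : Submodule k A where
  carrier := I
  add_mem' := fun ha hb => I.add_mem ha hb
  zero_mem' := I.zero_mem
  smul_mem' := fun c x hx => by
    rw [Algebra.smul_def]
    exact I.mul_mem_left _ _ hx

/-- A locally finite ℕ-graded `k`-algebra `A` is *projectively simple* if
`dim_k A = ∞` and `dim_k A/I < ∞` for every nonzero graded two-sided ideal `I` of `A`
(graded meaning that `I` contains all homogeneous components of its elements, i.e.
`I = ⊕ₙ (I ∩ Aₙ)`). -/
def ProjectivelySimple (k : Type*) {A : Type*} [Field k] [Ring A] [Algebra k A]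
    (𝒜 : ℕ → Submodule k A) [GradedAlgebra 𝒜] : Prop :=
  ¬ FiniteDimensional k A ∧
  ∀ I : TwoSidedIdeal A, I ≠ ⊥ →
    (∀ x ∈ I, ∀ n, (DirectSum.decompose 𝒜 x n : A) ∈ I) →
    FiniteDimensional k (A ⧸ I.ksub k)

/-!
Pick `d ≥ 1` with `A_d ≠ 0`. The two-sided ideal `J = A A_d A` is graded and nonzero, so `A/J` is
finite dimensional and `A = A_{≤N} + J` for some `N ≥ d`. The degree-`n` part of `J` is spanned by
products `a x b` with `x ∈ A_d` and `a`, `b` homogeneous, all three of degree `< n` once `n > N`;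
so by induction on the degree the finite-dimensional space `A_{≤N}` generates `A`.
-/

open DirectSum Filter

namespace DirectSum

section

variable {R M : Type*} [Semiring R] [AddCommMonoid M] [Module R M]

theorem decompose_mem_iSup_of_le {ι κ : Type*} [DecidableEq ι] (ℳ : ι → Submodule R M)
    [Decomposition ℳ] (p : κ → Submodule R M) (deg : κ → ι) (hp : ∀ j, p j ≤ ℳ (deg j))
    {x : M} (hx : x ∈ ⨆ j, p j) (i : ι) :
    (decompose ℳ x i : M) ∈ ⨆ (j) (_ : deg j = i), p j := by
  induction hx using Submodule.iSup_induction' with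
  | mem j y hy =>
    by_cases h : deg j = i
    · rw [decompose_of_mem_same ℳ (h ▸ hp j hy)]
      exact Submodule.mem_iSup_of_mem j (Submodule.mem_iSup_of_mem h hy)
    · rw [decompose_of_mem_ne ℳ (hp j hy) h]
      exact zero_mem _
  | zero => simp
  | add y z _ _ hy hz =>
    rw [decompose_add, add_apply, Submodule.coe_add]
    exact add_mem hy hz

variable (ℳ : ℕ → Submodule R M) [Decomposition ℳ]

theorem decompose_eq_zero_of_mem_iSup_Iic {N n : ℕ} (hn : N < n) {x : M}
    (hx : x ∈ ⨆ i ∈ Finset.Iic N, ℳ i) : (decompose ℳ x n : M) = 0 := by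
  have := decompose_mem_iSup_of_le ℳ (fun i => ⨆ _ : i ∈ Finset.Iic N, ℳ i) id
    (fun i => iSup_le fun _ => le_rfl) hx n
  simpa [hn.not_ge] using this

theorem submodule_eq_top_of_strong_induction (p : Submodule R M)
    (h : ∀ n, (∀ i < n, ℳ i ≤ p) → ℳ n ≤ p) : p = ⊤ := by
  rw [eq_top_iff, ← (Decomposition.isInternal ℳ).submodule_iSup_eq_top]
  exact iSup_le fun n => Nat.strong_induction_on n h

end

theorem eventually_iSup_Iic_sup_eq_top {R M : Type*} [Ring R] [AddCommGroup M] [Module R M]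
    (ℳ : ℕ → Submodule R M) [Decomposition ℳ] (p : Submodule R M) [Module.Finite R (M ⧸ p)] :
    ∀ᶠ N in atTop, (⨆ i ∈ Finset.Iic N, ℳ i) ⊔ p = ⊤ := by
  have hcompact : IsCompactElement (⊤ : Submodule R (M ⧸ p)) :=
    (Submodule.fg_iff_compact ⊤).mp Module.Finite.fg_top
  have hle : (⊤ : Submodule R (M ⧸ p)) ≤ ⨆ i, (ℳ i).map p.mkQ := by
    rw [← Submodule.map_iSup, (Decomposition.isInternal ℳ).submodule_iSup_eq_top,
      Submodule.map_top, Submodule.range_mkQ]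
  obtain ⟨s, hs⟩ := CompleteLattice.IsCompactElement.exists_finset_of_le_iSup _ hcompact _ hle
  filter_upwards [eventually_ge_atTop (s.sup id)] with N hN
  rw [eq_top_iff, sup_comm, ← Submodule.comap_map_mkQ, ← Submodule.map_le_iff_le_comap,
    Submodule.map_top, Submodule.range_mkQ]
  simp only [Submodule.map_iSup]
  exact hs.trans (biSup_mono fun i hi => Finset.mem_Iic.mpr ((Finset.le_sup hi).trans hN))

end DirectSum

namespace Submodule

variable {k A : Type*} [CommSemiring k] [Semiring A] [Algebra k A]

theorem le_top_mul_mul_top (M : Submodule k A) : M ≤ ⊤ * M * ⊤ :=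
  calc M = 1 * M * 1 := by rw [one_mul, mul_one]
    _ ≤ ⊤ * M * ⊤ := mul_le_mul' (mul_le_mul' le_top le_rfl) le_top

theorem mul_mul_mem_top_mul_mul_top {M : Submodule k A} (a b : A) {x : A}
    (hx : x ∈ ⊤ * M * ⊤) : a * x * b ∈ ⊤ * M * ⊤ := by
  have hle : ⊤ * (⊤ * M * ⊤) * ⊤ ≤ ⊤ * M * ⊤ :=
    calc ⊤ * (⊤ * M * ⊤) * ⊤ = ⊤ * ⊤ * M * (⊤ * ⊤) := by simp only [mul_assoc]
      _ ≤ ⊤ * M * ⊤ := mul_le_mul' (mul_le_mul' le_top le_rfl) le_top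
  exact hle (mul_mem_mul (mul_mem_mul mem_top hx) mem_top)

end Submodule

namespace GradedAlgebra

section

variable {ι k A : Type*} [DecidableEq ι] [AddMonoid ι] [CommSemiring k] [Semiring A]
  [Algebra k A] (𝒜 : ι → Submodule k A) [GradedAlgebra 𝒜]

theorem top_mul_mul_top_eq_iSup (M : Submodule k A) :
    ⊤ * M * ⊤ = ⨆ ab : ι × ι, 𝒜 ab.1 * M * 𝒜 ab.2 := by
  rw [← (Decomposition.isInternal 𝒜).submodule_iSup_eq_top, iSup_prod, iSup_comm]
  simp only [Submodule.iSup_mul, Submodule.mul_iSup]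

theorem grade_mul_grade_mul_grade_le (a d b : ι) : 𝒜 a * 𝒜 d * 𝒜 b ≤ 𝒜 (a + d + b) :=
  Submodule.mul_le.mpr fun _ hx _ hy => SetLike.mul_mem_graded
    (Submodule.mul_le.mpr (fun _ hu _ hv => SetLike.mul_mem_graded hu hv) hx) hy

theorem decompose_mem_iSup_of_mem_top_mul_grade_mul_top {d : ι} {x : A}
    (hx : x ∈ ⊤ * 𝒜 d * ⊤) (n : ι) :
    (decompose 𝒜 x n : A) ∈ ⨆ (ab : ι × ι) (_ : ab.1 + d + ab.2 = n), 𝒜 ab.1 * 𝒜 d * 𝒜 ab.2 := by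
  rw [top_mul_mul_top_eq_iSup 𝒜] at hx
  exact decompose_mem_iSup_of_le 𝒜 _ _ (fun ab => grade_mul_grade_mul_grade_le 𝒜 _ _ _) hx n

theorem decompose_mem_top_mul_grade_mul_top {d : ι} {x : A} (hx : x ∈ ⊤ * 𝒜 d * ⊤) (n : ι) :
    (decompose 𝒜 x n : A) ∈ ⊤ * 𝒜 d * ⊤ := by
  have hle : (⨆ (ab : ι × ι) (_ : ab.1 + d + ab.2 = n), 𝒜 ab.1 * 𝒜 d * 𝒜 ab.2) ≤ ⊤ * 𝒜 d * ⊤ := by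
    rw [top_mul_mul_top_eq_iSup 𝒜]
    exact iSup₂_le fun ab _ => le_iSup (fun ab : ι × ι => 𝒜 ab.1 * 𝒜 d * 𝒜 ab.2) ab
  exact hle (decompose_mem_iSup_of_mem_top_mul_grade_mul_top 𝒜 hx n)

end

theorem adjoin_iSup_Iic_eq_top {k A : Type*} [CommSemiring k] [Semiring A] [Algebra k A]
    (𝒜 : ℕ → Submodule k A) [GradedAlgebra 𝒜] {d N : ℕ} (hd : 1 ≤ d) (hdN : d ≤ N)
    (hN : (⨆ i ∈ Finset.Iic N, 𝒜 i) ⊔ ⊤ * 𝒜 d * ⊤ = ⊤) :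
    Algebra.adjoin k ((⨆ i ∈ Finset.Iic N, 𝒜 i : Submodule k A) : Set A) = ⊤ := by
  set B := Algebra.adjoin k ((⨆ i ∈ Finset.Iic N, 𝒜 i : Submodule k A) : Set A)
  have hB : Subalgebra.toSubmodule B * Subalgebra.toSubmodule B * Subalgebra.toSubmodule B =
      Subalgebra.toSubmodule B := by
    rw [B.isIdempotentElem_toSubmodule.eq, B.isIdempotentElem_toSubmodule.eq]
  refine Subalgebra.toSubmodule_injective <|
    (submodule_eq_top_of_strong_induction 𝒜 _ fun n ih => ?_).trans Algebra.top_toSubmodule.symm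
  rcases le_or_gt n N with hn | hn
  · exact (le_biSup 𝒜 (Finset.mem_Iic.mpr hn)).trans Algebra.subset_adjoin
  intro x hx
  obtain ⟨y, hy, z, hz, rfl⟩ := Submodule.mem_sup.mp (hN ▸ Submodule.mem_top : x ∈ _)
  rw [← decompose_of_mem_same 𝒜 hx, decompose_add, DirectSum.add_apply, Submodule.coe_add,
    decompose_eq_zero_of_mem_iSup_Iic 𝒜 hn hy, zero_add]
  have hle : (⨆ (ab : ℕ × ℕ) (_ : ab.1 + d + ab.2 = n), 𝒜 ab.1 * 𝒜 d * 𝒜 ab.2) ≤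
      Subalgebra.toSubmodule B := iSup₂_le fun ab hab =>
    (mul_le_mul' (mul_le_mul' (ih _ (by omega)) (ih _ (by omega))) (ih _ (by omega))).trans hB.le
  exact hle (decompose_mem_iSup_of_mem_top_mul_grade_mul_top 𝒜 hz n)

end GradedAlgebra

theorem Algebra.FiniteType.of_adjoin_fg_eq_top {R A : Type*} [CommSemiring R] [Semiring A]
    [Algebra R A] {V : Submodule R A} (hV : V.FG) (h : Algebra.adjoin R (V : Set A) = ⊤) :
    Algebra.FiniteType R A := by
  obtain ⟨s, rfl⟩ := hV
  exact ⟨⟨s, by rwa [Algebra.adjoin_span] at h⟩⟩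

theorem ProjectivelySimple.finiteDimensional_quotient {k A : Type*} [Field k] [Ring A]
    [Algebra k A] {𝒜 : ℕ → Submodule k A} [GradedAlgebra 𝒜] (hps : ProjectivelySimple k 𝒜)
    {p : Submodule k A} (hp : p ≠ ⊥) (hmul : ∀ a b : A, ∀ x ∈ p, a * x * b ∈ p)
    (hgr : ∀ x ∈ p, ∀ n, (decompose 𝒜 x n : A) ∈ p) : FiniteDimensional k (A ⧸ p) := by
  let I : TwoSidedIdeal A := .mk' p p.zero_mem p.add_mem p.neg_mem
    (fun {a x} hx => by simpa using hmul a 1 x hx) (fun {x b} hx => by simpa using hmul 1 b x hx)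
  have hmem : ∀ x, x ∈ I ↔ x ∈ p := TwoSidedIdeal.mem_mk' _ _ _ _ _ _
  have hI : I.ksub k = p := SetLike.ext hmem
  rw [← hI]
  refine hps.2 I (fun h => hp ?_) (fun x hx n => (hmem _).mpr (hgr x ((hmem x).mp hx) n))
  rw [← hI, h]
  ext x
  exact (TwoSidedIdeal.mem_bot A).trans (Submodule.mem_bot k).symm

theorem projectively_simple_finitely_generated
    (k : Type*) {A : Type*} [Field k] [Ring A] [Algebra k A]
    (𝒜 : ℕ → Submodule k A) [GradedAlgebra 𝒜]
    (hlf : ∀ n, FiniteDimensional k (𝒜 n))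
    (hm : ∃ n, 1 ≤ n ∧ 𝒜 n ≠ ⊥)
    (hps : ProjectivelySimple k 𝒜) :
    Algebra.FiniteType k A := by
  obtain ⟨d, hd, hd0⟩ := hm
  have : FiniteDimensional k (A ⧸ ⊤ * 𝒜 d * ⊤) :=
    hps.finiteDimensional_quotient (ne_bot_of_le_ne_bot hd0 (Submodule.le_top_mul_mul_top _))
      (fun a b _ hx => Submodule.mul_mul_mem_top_mul_mul_top a b hx)
      (fun _ hx n => GradedAlgebra.decompose_mem_top_mul_grade_mul_top 𝒜 hx n)
  obtain ⟨N, hN, hdN⟩ :=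
    ((eventually_iSup_Iic_sup_eq_top 𝒜 (⊤ * 𝒜 d * ⊤)).and (eventually_ge_atTop d)).exists
  exact .of_adjoin_fg_eq_top (Submodule.fg_biSup _ _ fun i _ => Module.Finite.iff_fg.mp (hlf i))
    (GradedAlgebra.adjoin_iSup_Iic_eq_top 𝒜 hd hdN hN)
end

section
/- Let k be a field and let A be a locally finite ℕ-graded k-algebra with A_{≥1} ≠ 0. If A is projectively simple, then A is a prime ring. If moreover A is connected graded (A_0 = k), then the only nonzero graded prime ideal of A is m = A_{≥1}. -/
/-- A ring is prime iff `a A b = 0` forces `a = 0` or `b = 0`; this is the element-wise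
characterization of "the product of two nonzero two-sided ideals is nonzero". -/
def IsPrimeRing' (A : Type*) [Ring A] : Prop :=
  ∀ a b : A, (∀ x : A, a * x * b = 0) → a = 0 ∨ b = 0

/-!
If `a A b = 0` with `a, b ≠ 0`, the same holds for their lowest-degree components, which generate
nonzero graded ideals `I, J` with `I J = 0`. Having finite codimension, both contain `A_{≥N}` for
some `N`, so `A_{≥N} A_{≥N} = 0`. A nonzero homogeneous `c` of degree `≥ N`, which exists since
`dim A = ∞`, then generates an ideal inside `A_{<N} c A_{<N}`, finite-dimensional and of finite
codimension: a contradiction.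

A nonzero graded prime `P` contains `A_{≥N}` for some `N`. For homogeneous `y` of degree `n ≥ 1`,
`y A y` lies in degrees `> n`, so downward induction puts all of `A_{≥1}` into `P`; and `P ≠ A`
forces `P ∩ A_0 = P ∩ k = 0`.
-/

open DirectSum

namespace GradedRing

theorem proj_of_mem {ι σ A : Type*} [DecidableEq ι] [AddMonoid ι] [Semiring A] [SetLike σ A]
    [AddSubmonoidClass σ A] {𝒜 : ι → σ} [GradedRing 𝒜] {x : A} {i : ι} (hx : x ∈ 𝒜 i) (n : ι) :
    proj 𝒜 n x = if i = n then x else 0 := by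
  split_ifs with h
  · exact decompose_of_mem_same 𝒜 (h ▸ hx)
  · exact decompose_of_mem_ne 𝒜 hx h

variable {σ A : Type*} [Ring A] [SetLike σ A] [AddSubgroupClass σ A] {𝒜 : ℕ → σ} [GradedRing 𝒜]

theorem exists_proj_ne_zero_forall_lt {a : A} (ha : a ≠ 0) :
    ∃ d, proj 𝒜 d a ≠ 0 ∧ ∀ i < d, proj 𝒜 i a = 0 := by
  classical
  have h : ∃ d, proj 𝒜 d a ≠ 0 := by
    by_contra! h
    rw [← sum_support_decompose 𝒜 a] at ha
    exact ha (Finset.sum_eq_zero fun i _ => h i)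
  exact ⟨Nat.find h, Nat.find_spec h, fun i hi => not_not.1 (Nat.find_min h hi)⟩

theorem proj_mul_eq_zero_of_lt_add {x y : A} {m n k : ℕ} (hx : ∀ i < m, proj 𝒜 i x = 0)
    (hy : ∀ j < n, proj 𝒜 j y = 0) (hk : k < m + n) : proj 𝒜 k (x * y) = 0 := by
  rw [proj_apply, decompose_mul, ZeroMemClass.coe_eq_zero]
  exact mul_apply_eq_zero (fun i hi => by simpa [proj_apply] using hx i hi)
    (fun j hj => by simpa [proj_apply] using hy j hj) hk

theorem proj_add_mul_eq_mul_proj {x y : A} {m n : ℕ} (hx : ∀ i < m, proj 𝒜 i x = 0)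
    (hy : ∀ j < n, proj 𝒜 j y = 0) : proj 𝒜 (m + n) (x * y) = proj 𝒜 m x * proj 𝒜 n y := by
  rw [proj_apply, decompose_mul, coe_mul_apply_eq_sum_antidiagonal,
    Finset.sum_eq_single_of_mem (m, n) (by simp)]
  · rfl
  rintro ⟨i, j⟩ hij hne
  rw [Finset.HasAntidiagonal.mem_antidiagonal] at hij
  rcases lt_or_ge i m with hi | hi
  · simp [← proj_apply, hx i hi]
  · simp [← proj_apply, hy j (by grind)]

theorem proj_mul_mul_proj_eq_zero {a b : A} {d e : ℕ} (hab : ∀ z, a * z * b = 0)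
    (ha : ∀ i < d, proj 𝒜 i a = 0) (hb : ∀ j < e, proj 𝒜 j b = 0) (z : A) :
    proj 𝒜 d a * z * proj 𝒜 e b = 0 := by
  induction z using Decomposition.inductionOn 𝒜 with
  | zero => simp
  | @homogeneous m z =>
    have hz : ∀ j < m, proj 𝒜 j (z : A) = 0 := fun j hj => by
      rw [proj_of_mem z.2, if_neg hj.ne']
    have h := proj_add_mul_eq_mul_proj (fun i hi => proj_mul_eq_zero_of_lt_add ha hz hi) hb
    rwa [proj_add_mul_eq_mul_proj ha hz, proj_of_mem z.2, if_pos rfl, hab, map_zero, eq_comm] at h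
  | add z z' h h' => rw [mul_add, add_mul, h, h', add_zero]

end GradedRing

namespace TwoSidedIdeal

open GradedRing

variable {A : Type*} [Ring A]

theorem mul_eq_zero_of_mem_span_singleton {a b u v : A} (hab : ∀ z, a * z * b = 0)
    (hu : u ∈ span {a}) (hv : v ∈ span {b}) : u * v = 0 := by
  have hav : ∀ v ∈ span {b}, ∀ z, a * z * v = 0 := by
    intro v hv
    induction hv using span_induction with
    | mem x hx => rwa [Set.mem_singleton_iff.1 hx]
    | zero => simp
    | add x y _ _ hx hy => simp [mul_add, hx, hy]
    | neg x _ hx => simp [hx]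
    | left_absorb c x _ hx => intro z; rw [← mul_assoc, mul_assoc a, hx]
    | right_absorb c x _ hx => intro z; rw [← mul_assoc, hx, zero_mul]
  induction hu using span_induction generalizing v with
  | mem x hx => rw [Set.mem_singleton_iff.1 hx, ← hav v hv 1, mul_one]
  | zero => exact zero_mul v
  | add x y _ _ hx hy => rw [add_mul, hx hv, hy hv, add_zero]
  | neg x _ hx => rw [neg_mul, hx hv, neg_zero]
  | left_absorb c x _ hx => rw [mul_assoc, hx hv, mul_zero]
  | right_absorb c x _ hx => rw [mul_assoc, hx (mul_mem_left _ c v hv)]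

variable {σ : Type*} [SetLike σ A] [AddSubgroupClass σ A] {𝒜 : ℕ → σ} [GradedRing 𝒜]

theorem isHomogeneous_span {s : Set A} (hs : ∀ c ∈ s, SetLike.IsHomogeneousElem 𝒜 c) :
    SetLike.IsHomogeneous 𝒜 (span s) := by
  classical
  intro n x hx
  rw [← proj_apply]
  induction hx using span_induction generalizing n with
  | mem x hx =>
    obtain ⟨i, hi⟩ := hs x hx
    rw [proj_of_mem hi]
    split_ifs
    exacts [subset_span hx, zero_mem _]
  | zero => rw [map_zero]; exact zero_mem _
  | add x y _ _ hx hy => rw [map_add]; exact add_mem _ (hx n) (hy n)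
  | neg x _ hx => rw [map_neg]; exact neg_mem _ (hx n)
  | left_absorb c x _ hx =>
    induction c using Decomposition.inductionOn 𝒜 with
    | zero => rw [zero_mul, map_zero]; exact zero_mem _
    | @homogeneous i c =>
      rw [proj_apply, coe_decompose_mul_of_left_mem 𝒜 n c.2]
      split_ifs
      exacts [mul_mem_left _ _ _ (hx _), zero_mem _]
    | add c c' hc hc' => rw [add_mul, map_add]; exact add_mem _ hc hc'
  | right_absorb c x _ hx =>
    induction c using Decomposition.inductionOn 𝒜 with
    | zero => rw [mul_zero, map_zero]; exact zero_mem _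
    | @homogeneous i c =>
      rw [proj_apply, coe_decompose_mul_of_right_mem 𝒜 n c.2]
      split_ifs
      exacts [mul_mem_right _ _ _ (hx _), zero_mem _]
    | add c c' hc hc' => rw [mul_add, map_add]; exact add_mem _ hc hc'

theorem proj_eq_zero_of_mem_span_singleton {N n : ℕ} {c x : A}
    (hsq : ∀ i j, N ≤ i → N ≤ j → ∀ u ∈ 𝒜 i, ∀ v ∈ 𝒜 j, u * v = 0) (hc : c ∈ 𝒜 n) (hn : N ≤ n)
    (hx : x ∈ span {c}) : ∀ i, n + N + N ≤ i → proj 𝒜 i x = 0 := by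
  have key (u w : A) : ∀ i, n + N + N ≤ i → proj 𝒜 i (u * c * w) = 0 := by
    intro i hi
    induction u using Decomposition.inductionOn 𝒜 with
    | zero => simp
    | @homogeneous p u =>
      induction w using Decomposition.inductionOn 𝒜 with
      | zero => simp
      | @homogeneous q w =>
        by_cases hp : N ≤ p
        · rw [hsq p n hp hn u u.2 c hc, zero_mul, map_zero]
        by_cases hq : N ≤ q
        · rw [mul_assoc, hsq n q hn hq c hc w w.2, mul_zero, map_zero]
        rw [proj_of_mem (SetLike.mul_mem_graded (SetLike.mul_mem_graded u.2 hc) w.2),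
          if_neg (by omega)]
      | add w w' h h' => rw [mul_add, map_add, h, h', add_zero]
    | add u u' h h' => rw [add_mul, add_mul, map_add, h, h', add_zero]
  rw [mem_span_iff_mem_addSubgroup_closure] at hx
  induction hx using AddSubgroup.closure_induction with
  | mem w hw =>
    obtain ⟨_, ⟨x, -, c', hc', rfl⟩, y, -, rfl⟩ := hw
    rw [Set.mem_singleton_iff.1 hc']
    exact key x y
  | zero => simp
  | add x y _ _ hx hy => intro i hi; rw [map_add, hx i hi, hy i hi, add_zero]
  | neg x _ hx => intro i hi; rw [map_neg, hx i hi, neg_zero]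

theorem forall_graded_mem_of_semiprime {P : TwoSidedIdeal A} {N : ℕ}
    (hP : ∀ y, (∀ z, y * z * y ∈ P) → y ∈ P) (hN : ∀ n, N ≤ n → ∀ x ∈ 𝒜 n, x ∈ P) :
    ∀ n, 1 ≤ n → ∀ x ∈ 𝒜 n, x ∈ P := by
  intro n hn
  obtain ⟨j, hj⟩ : ∃ j, N ≤ n + j := ⟨N, by omega⟩
  induction j generalizing n with
  | zero => exact hN n hj
  | succ j ih =>
    intro y hy
    refine hP y fun z => ?_
    induction z using Decomposition.inductionOn 𝒜 with
    | zero => rw [mul_zero, zero_mul]; exact zero_mem _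
    | @homogeneous m z =>
      exact ih _ (by omega) (by omega) _ (SetLike.mul_mem_graded (SetLike.mul_mem_graded hy z.2) hy)
    | add z z' h h' => rw [mul_add, add_mul]; exact add_mem _ h h'

theorem mem_iff_proj_zero_eq_zero {P : TwoSidedIdeal A} (hP : SetLike.IsHomogeneous 𝒜 P)
    (h0 : ∀ x ∈ 𝒜 0, x ∈ P → x = 0) (hpos : ∀ n, 1 ≤ n → ∀ x ∈ 𝒜 n, x ∈ P) (x : A) :
    x ∈ P ↔ proj 𝒜 0 x = 0 := by
  classical
  refine ⟨fun hx => h0 _ (SetLike.coe_mem _) (hP 0 hx), fun hx => ?_⟩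
  rw [← sum_support_decompose 𝒜 x]
  refine sum_mem fun i _ => ?_
  rcases i.eq_zero_or_pos with rfl | hi
  · rw [← proj_apply, hx]; exact zero_mem _
  · exact hpos i hi _ (SetLike.coe_mem _)

theorem eq_zero_of_mem_one {k : Type*} [Field k] [Algebra k A] {P : TwoSidedIdeal A} (hP : P ≠ ⊤)
    {x : A} (hx : x ∈ (1 : Submodule k A)) (hxP : x ∈ P) : x = 0 := by
  obtain ⟨r, rfl⟩ := Submodule.mem_one.1 hx
  by_contra hx0
  have hr : r ≠ 0 := fun h => hx0 (by rw [h, map_zero])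
  refine hP (eq_top P ?_)
  simpa [← map_mul, inv_mul_cancel₀ hr] using mul_mem_left P (algebraMap k A r⁻¹) _ hxP

end TwoSidedIdeal

section Algebra

open GradedRing TwoSidedIdeal

variable {k A : Type*} [Field k] [Ring A] [Algebra k A] {𝒜 : ℕ → Submodule k A} [GradedAlgebra 𝒜]

theorem finiteDimensional_of_forall_proj_eq_zero (hlf : ∀ n, FiniteDimensional k (𝒜 n))
    {S : Submodule k A} {M : ℕ} (hS : ∀ x ∈ S, ∀ i, M ≤ i → proj 𝒜 i x = 0) :
    FiniteDimensional k S := by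
  classical
  refine Submodule.finiteDimensional_of_le (S₂ := (Finset.range M).sup 𝒜) fun x hx => ?_
  rw [← sum_support_decompose 𝒜 x]
  refine sum_mem fun i _ => ?_
  by_cases hi : i < M
  · exact Finset.le_sup (f := 𝒜) (Finset.mem_range.2 hi) (SetLike.coe_mem _)
  · rw [← proj_apply, hS x hx i (not_lt.1 hi)]
    exact zero_mem _

/-- The degrees in which a homogeneous ideal `I` misses some element index linearly independent
vectors of `A ⧸ I`. -/
theorem DirectSum.SetLike.IsHomogeneous.exists_forall_mem_of_finiteDimensional
    {I : TwoSidedIdeal A}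
    (hI : SetLike.IsHomogeneous 𝒜 I) [FiniteDimensional k (A ⧸ I.ksub k)] :
    ∃ N, ∀ n, N ≤ n → ∀ x ∈ 𝒜 n, x ∈ I := by
  classical
  set T : Set ℕ := {n | ∃ x ∈ 𝒜 n, x ∉ I}
  suffices T.Finite by
    obtain ⟨N, hN⟩ := this.bddAbove
    exact ⟨N + 1, fun n hn x hx => by_contra fun hxI => absurd (hN ⟨x, hx, hxI⟩) (by omega)⟩
  choose f hf hfI using fun t : T => t.2
  refine Set.finite_coe_iff.1 (LinearIndependent.finite_of_isNoetherian (R := k)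
    (v := fun t => (I.ksub k).mkQ (f t)) (linearIndependent_iff'.2 fun s g hsum t ht => ?_))
  have hmem : ∑ r ∈ s, g r • f r ∈ I.ksub k := by
    rw [← Submodule.Quotient.mk_eq_zero, ← Submodule.mkQ_apply, map_sum]
    simpa using hsum
  have hcomp := hI t hmem
  rw [← proj_apply, map_sum, Finset.sum_eq_single_of_mem t ht] at hcomp
  · by_contra hg
    rw [proj_of_mem (Submodule.smul_mem _ _ (hf t)), if_pos rfl] at hcomp
    exact hfI t (((I.ksub k).smul_mem_iff hg).1 hcomp)
  · intro r _ hrt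
    rw [proj_of_mem (Submodule.smul_mem _ _ (hf r)), if_neg (Subtype.coe_ne_coe.2 hrt)]

namespace ProjectivelySimple

theorem exists_ge_ne_zero (hps : ProjectivelySimple k 𝒜) (hlf : ∀ n, FiniteDimensional k (𝒜 n))
    (N : ℕ) :
    ∃ n, N ≤ n ∧ ∃ c ∈ 𝒜 n, c ≠ 0 := by
  by_contra! h
  have := finiteDimensional_of_forall_proj_eq_zero hlf (S := ⊤) (M := N)
    fun x _ i hi => h i hi _ (SetLike.coe_mem _)
  exact hps.1 (Module.Finite.equiv Submodule.topEquiv)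

theorem finiteDimensional_quotient_span_singleton (hps : ProjectivelySimple k 𝒜) {c : A} {d : ℕ}
    (hc : c ∈ 𝒜 d) (hc0 : c ≠ 0) :
    FiniteDimensional k (A ⧸ (span {c}).ksub k) :=
  hps.2 _ (fun h => hc0 (by simpa [h] using subset_span (Set.mem_singleton c)))
    fun _ hx n => isHomogeneous_span (by rintro _ rfl; exact ⟨d, hc⟩) n hx

theorem exists_forall_mem_span_singleton (hps : ProjectivelySimple k 𝒜) {c : A} {d : ℕ}
    (hc : c ∈ 𝒜 d) (hc0 : c ≠ 0) : ∃ N, ∀ n, N ≤ n → ∀ x ∈ 𝒜 n, x ∈ span {c} :=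
  have := hps.finiteDimensional_quotient_span_singleton hc hc0
  (isHomogeneous_span (by rintro _ rfl; exact ⟨d, hc⟩)).exists_forall_mem_of_finiteDimensional

theorem not_forall_mul_eq_zero (hps : ProjectivelySimple k 𝒜)
    (hlf : ∀ n, FiniteDimensional k (𝒜 n)) (N : ℕ) :
    ¬ ∀ i j, N ≤ i → N ≤ j → ∀ u ∈ 𝒜 i, ∀ v ∈ 𝒜 j, u * v = 0 := by
  intro hsq
  obtain ⟨n, hn, c, hc, hc0⟩ := hps.exists_ge_ne_zero hlf N
  have := hps.finiteDimensional_quotient_span_singleton hc hc0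
  have := finiteDimensional_of_forall_proj_eq_zero hlf (S := (span {c}).ksub k)
    fun _ hx => proj_eq_zero_of_mem_span_singleton hsq hc hn hx
  exact hps.1 (Module.Finite.of_submodule_quotient ((span {c}).ksub k))

theorem isPrimeRing' (hps : ProjectivelySimple k 𝒜) (hlf : ∀ n, FiniteDimensional k (𝒜 n)) :
    IsPrimeRing' A := by
  intro a b hab
  by_contra! ⟨ha, hb⟩
  obtain ⟨d, had, hd⟩ := exists_proj_ne_zero_forall_lt (𝒜 := 𝒜) ha
  obtain ⟨e, hbe, he⟩ := exists_proj_ne_zero_forall_lt (𝒜 := 𝒜) hb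
  obtain ⟨N₁, hN₁⟩ := hps.exists_forall_mem_span_singleton (SetLike.coe_mem _) had
  obtain ⟨N₂, hN₂⟩ := hps.exists_forall_mem_span_singleton (SetLike.coe_mem _) hbe
  refine hps.not_forall_mul_eq_zero hlf (max N₁ N₂) fun i j hi hj u hu v hv => ?_
  exact mul_eq_zero_of_mem_span_singleton (proj_mul_mul_proj_eq_zero hab hd he)
    (hN₁ i (le_of_max_le_left hi) u hu) (hN₂ j (le_of_max_le_right hj) v hv)

end ProjectivelySimple

end Algebra

theorem projectively_simple_prime_general
    (k : Type*) {A : Type*} [Field k] [Ring A] [Algebra k A]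
    (𝒜 : ℕ → Submodule k A) [GradedAlgebra 𝒜]
    (hlf : ∀ n, FiniteDimensional k (𝒜 n))
    (hps : ProjectivelySimple k 𝒜) :
    IsPrimeRing' A ∧
    -- if furthermore `A` is connected graded, every nonzero graded prime (two-sided) ideal
    -- `P` of `A` equals `m = A_{≥1}`, i.e. consists exactly of the elements with vanishing
    -- degree-zero component
    (𝒜 0 = (1 : Submodule k A) →
      ∀ P : TwoSidedIdeal A, P ≠ ⊥ → P ≠ ⊤ →
        (∀ x ∈ P, ∀ n, (DirectSum.decompose 𝒜 x n : A) ∈ P) →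
        (∀ a b : A, (∀ x : A, a * x * b ∈ P) → a ∈ P ∨ b ∈ P) →
        ∀ x : A, x ∈ P ↔ (DirectSum.decompose 𝒜 x 0 : A) = 0) := by
  refine ⟨hps.isPrimeRing' hlf, fun hconn P hP0 hPtop hPgr hPprime => ?_⟩
  have hP : SetLike.IsHomogeneous 𝒜 P := fun n _ hx => hPgr _ hx n
  have := hps.2 P hP0 hPgr
  obtain ⟨N, hN⟩ := hP.exists_forall_mem_of_finiteDimensional
  have hpos := TwoSidedIdeal.forall_graded_mem_of_semiprime
    (fun y hy => or_self_iff.1 (hPprime y y hy)) hN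
  exact TwoSidedIdeal.mem_iff_proj_zero_eq_zero hP
    (fun x hx => TwoSidedIdeal.eq_zero_of_mem_one hPtop (hconn ▸ hx)) hpos

theorem projectively_simple_prime
    (k : Type*) {A : Type*} [Field k] [Ring A] [Algebra k A]
    (𝒜 : ℕ → Submodule k A) [GradedAlgebra 𝒜]
    (hlf : ∀ n, FiniteDimensional k (𝒜 n))
    (hm : ∃ n, 1 ≤ n ∧ 𝒜 n ≠ ⊥)
    (hps : ProjectivelySimple k 𝒜) :
    IsPrimeRing' A ∧
    -- if furthermore `A` is connected graded, every nonzero graded prime (two-sided) ideal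
    -- `P` of `A` equals `m = A_{≥1}`, i.e. consists exactly of the elements with vanishing
    -- degree-zero component
    (𝒜 0 = (1 : Submodule k A) →
      ∀ P : TwoSidedIdeal A, P ≠ ⊥ → P ≠ ⊤ →
        (∀ x ∈ P, ∀ n, (DirectSum.decompose 𝒜 x n : A) ∈ P) →
        (∀ a b : A, (∀ x : A, a * x * b ∈ P) → a ∈ P ∨ b ∈ P) →
        ∀ x : A, x ∈ P ↔ (DirectSum.decompose 𝒜 x 0 : A) = 0) :=
  projectively_simple_prime_general k 𝒜 hlf hps
end

section
/- Let k be a field and let A be a locally finite ℕ-graded k-algebra with A_{≥1} ≠ 0. If A is projectively simple, then dim_k A/J < ∞ for every nonzero (not necessarily graded) two-sided ideal J of A; in other words, A is a just infinite dimensional algebra. -/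
open DirectSum

namespace GradedModule

section Semiring

variable {k M : Type*} [Semiring k] [AddCommMonoid M] [Module k M]
variable (𝒜 : ℕ → Submodule k M) [Decomposition 𝒜]

def proj (n : ℕ) : M →ₗ[k] M :=
  (𝒜 n).subtype ∘ₗ DFinsupp.lapply n ∘ₗ (decomposeLinearEquiv 𝒜).toLinearMap

@[simp]
theorem proj_apply (n : ℕ) (x : M) : proj 𝒜 n x = decompose 𝒜 x n := rfl

variable {𝒜}

theorem proj_mem (n : ℕ) (x : M) : proj 𝒜 n x ∈ 𝒜 n := (decompose 𝒜 x n).2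

theorem proj_of_mem_same {n : ℕ} {x : M} (hx : x ∈ 𝒜 n) : proj 𝒜 n x = x :=
  decompose_of_mem_same 𝒜 hx

theorem proj_of_mem_ne {m n : ℕ} {x : M} (hx : x ∈ 𝒜 m) (hmn : m ≠ n) : proj 𝒜 n x = 0 :=
  decompose_of_mem_ne 𝒜 hx hmn

theorem eq_zero_of_proj_eq_zero {x : M} (hx : ∀ n, proj 𝒜 n x = 0) : x = 0 :=
  (decompose 𝒜).injective <| by ext n : 2; simpa using hx n

variable (𝒜)

def degreeLT (n : ℕ) : Submodule k M :=
  ⨅ (m : ℕ) (_ : n ≤ m), LinearMap.ker (proj 𝒜 m)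

def componentwise (S : ℕ → Submodule k M) : Submodule k M :=
  ⨅ n, (S n).comap (proj 𝒜 n)

def leadingSpace (V : Submodule k M) (n : ℕ) : Submodule k M :=
  (V ⊓ degreeLT 𝒜 (n + 1)).map (proj 𝒜 n)

/-- The associated graded `gr V` of the degree filtration on `V`, realised inside `M`. -/
def leadingSubmodule (V : Submodule k M) : Submodule k M :=
  componentwise 𝒜 (leadingSpace 𝒜 V)

variable {𝒜}

theorem mem_degreeLT {n : ℕ} {x : M} : x ∈ degreeLT 𝒜 n ↔ ∀ m, n ≤ m → proj 𝒜 m x = 0 := by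
  simp [degreeLT]

theorem mem_componentwise {S : ℕ → Submodule k M} {x : M} :
    x ∈ componentwise 𝒜 S ↔ ∀ n, proj 𝒜 n x ∈ S n := by
  simp [componentwise]

theorem degreeLT_zero : degreeLT 𝒜 0 = ⊥ :=
  eq_bot_iff.2 fun _ hx ↦ eq_zero_of_proj_eq_zero fun m ↦ mem_degreeLT.1 hx m m.zero_le

theorem le_degreeLT_succ (n : ℕ) : 𝒜 n ≤ degreeLT 𝒜 (n + 1) := fun _ hx ↦
  mem_degreeLT.2 fun _ hm ↦ proj_of_mem_ne hx (by omega)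

theorem mem_degreeLT_of_proj_eq_zero {n : ℕ} {x : M} (hx : x ∈ degreeLT 𝒜 (n + 1))
    (h : proj 𝒜 n x = 0) : x ∈ degreeLT 𝒜 n :=
  mem_degreeLT.2 fun m hm ↦ hm.eq_or_lt.elim (· ▸ h) (mem_degreeLT.1 hx m)

theorem exists_mem_degreeLT (x : M) : ∃ n, x ∈ degreeLT 𝒜 n := by
  classical
  refine ⟨(decompose 𝒜 x).support.sup id + 1, mem_degreeLT.2 fun m hm ↦ ?_⟩
  have : m ∉ (decompose 𝒜 x).support := fun hmem ↦ by
    have := Finset.le_sup (f := id) hmem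
    simp only [id] at this
    omega
  simpa using DFinsupp.notMem_support_iff.1 this

theorem exists_mem_degreeLT_proj_ne_zero {x : M} (hx : x ≠ 0) :
    ∃ n, x ∈ degreeLT 𝒜 (n + 1) ∧ proj 𝒜 n x ≠ 0 := by
  classical
  have hex := exists_mem_degreeLT (𝒜 := 𝒜) x
  obtain ⟨n, hn⟩ : ∃ n, Nat.find hex = n + 1 :=
    Nat.exists_eq_succ_of_ne_zero fun h ↦ hx <| by simpa [h, degreeLT_zero] using Nat.find_spec hex
  refine ⟨n, hn ▸ Nat.find_spec hex, fun h ↦ ?_⟩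
  exact Nat.find_min hex (by omega) (mem_degreeLT_of_proj_eq_zero (hn ▸ Nat.find_spec hex) h)

theorem leadingSpace_le (V : Submodule k M) (n : ℕ) : leadingSpace 𝒜 V n ≤ 𝒜 n :=
  Submodule.map_le_iff_le_comap.2 fun x _ ↦ proj_mem n x

theorem mem_componentwise_of_mem {S : ℕ → Submodule k M} {n : ℕ} {x : M} (hx : x ∈ 𝒜 n)
    (hS : x ∈ S n) : x ∈ componentwise 𝒜 S := by
  refine mem_componentwise.2 fun m ↦ ?_
  rcases eq_or_ne n m with rfl | hnm
  · rwa [proj_of_mem_same hx]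
  · rw [proj_of_mem_ne hx hnm]
    exact zero_mem _

theorem proj_mem_componentwise {S : ℕ → Submodule k M} {x : M} (hx : x ∈ componentwise 𝒜 S)
    (n : ℕ) : proj 𝒜 n x ∈ componentwise 𝒜 S :=
  mem_componentwise_of_mem (proj_mem n x) (mem_componentwise.1 hx n)

theorem disjoint_componentwise {S T : ℕ → Submodule k M} (h : ∀ n, Disjoint (S n) (T n)) :
    Disjoint (componentwise 𝒜 S) (componentwise 𝒜 T) := by
  refine Submodule.disjoint_def.2 fun x hS hT ↦ eq_zero_of_proj_eq_zero (𝒜 := 𝒜) fun n ↦ ?_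
  exact Submodule.disjoint_def.1 (h n) _ (mem_componentwise.1 hS n)
    (mem_componentwise.1 hT n)

end Semiring

section DivisionRing

variable {k M : Type*} [DivisionRing k] [AddCommGroup M] [Module k M]
variable {𝒜 : ℕ → Submodule k M} [Decomposition 𝒜]

theorem degreeLT_le_sup_componentwise (V : Submodule k M) {W : ℕ → Submodule k M}
    (hW : ∀ n, leadingSpace 𝒜 V n ⊔ W n = 𝒜 n) (n : ℕ) :
    degreeLT 𝒜 n ≤ V ⊔ componentwise 𝒜 W := by
  induction n with
  | zero => simp [degreeLT_zero]
  | succ n ih =>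
    intro y hy
    have hyn : proj 𝒜 n y ∈ leadingSpace 𝒜 V n ⊔ W n := (hW n).symm ▸ proj_mem n y
    obtain ⟨_, ⟨z, ⟨hzV, hz⟩, rfl⟩, w, hw, hyzw⟩ := Submodule.mem_sup.1 hyn
    have hwA : w ∈ 𝒜 n := hW n ▸ Submodule.mem_sup_right hw
    have hrest : y - z - w ∈ degreeLT 𝒜 n := by
      refine mem_degreeLT_of_proj_eq_zero
        (sub_mem (sub_mem hy hz) (le_degreeLT_succ n hwA)) ?_
      rw [map_sub, map_sub, proj_of_mem_same hwA, ← hyzw]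
      abel
    have hy : y = (y - z - w) + z + w := by abel
    rw [hy]
    exact add_mem (add_mem (ih hrest) (Submodule.mem_sup_left hzV))
      (Submodule.mem_sup_right (mem_componentwise_of_mem hwA hw))

theorem finiteDimensional_quotient_of_leadingSubmodule (V : Submodule k M)
    [FiniteDimensional k (M ⧸ leadingSubmodule 𝒜 V)] : FiniteDimensional k (M ⧸ V) := by
  choose W hdisj hsup using fun n ↦
    IsModularLattice.exists_disjoint_and_sup_eq (leadingSpace_le (𝒜 := 𝒜) V n)
  set C := componentwise 𝒜 W
  have : FiniteDimensional k C := by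
    refine FiniteDimensional.of_injective ((leadingSubmodule 𝒜 V).mkQ ∘ₗ C.subtype) ?_
    rw [← LinearMap.ker_eq_bot, LinearMap.ker_comp, Submodule.ker_mkQ,
      ← Submodule.disjoint_iff_comap_eq_bot]
    exact (disjoint_componentwise hdisj).symm
  have hVC : V ⊔ C = ⊤ := by
    refine eq_top_iff.2 fun x _ ↦ ?_
    obtain ⟨n, hn⟩ := exists_mem_degreeLT (𝒜 := 𝒜) x
    exact degreeLT_le_sup_componentwise V hsup n hn
  refine Module.Finite.of_surjective (V.mkQ ∘ₗ C.subtype) ?_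
  rw [← LinearMap.range_eq_top, LinearMap.range_comp, Submodule.range_subtype,
    Submodule.map_mkQ_eq_top]
  exact hVC

end DivisionRing

section Algebra

variable {k A : Type*} [Field k] [Ring A] [Algebra k A]
variable {𝒜 : ℕ → Submodule k A} [GradedAlgebra 𝒜]

@[simp]
theorem _root_.TwoSidedIdeal.mem_ksub {J : TwoSidedIdeal A} {x : A} : x ∈ J.ksub k ↔ x ∈ J :=
  Iff.rfl

theorem mul_mem_degreeLT_left {i n : ℕ} {a x : A} (ha : a ∈ 𝒜 i) (hx : x ∈ degreeLT 𝒜 n) :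
    a * x ∈ degreeLT 𝒜 (i + n) := by
  refine mem_degreeLT.2 fun m hm ↦ ?_
  rw [proj_apply, coe_decompose_mul_of_left_mem_of_le 𝒜 ha (by omega), ← proj_apply,
    mem_degreeLT.1 hx _ (by omega), mul_zero]

theorem mul_mem_degreeLT_right {i n : ℕ} {a x : A} (hx : x ∈ degreeLT 𝒜 n) (ha : a ∈ 𝒜 i) :
    x * a ∈ degreeLT 𝒜 (n + i) := by
  refine mem_degreeLT.2 fun m hm ↦ ?_
  rw [proj_apply, coe_decompose_mul_of_right_mem_of_le 𝒜 ha (by omega), ← proj_apply,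
    mem_degreeLT.1 hx _ (by omega), zero_mul]

theorem mul_mem_leadingSpace_left (J : TwoSidedIdeal A) {i n : ℕ} {a t : A} (ha : a ∈ 𝒜 i)
    (ht : t ∈ leadingSpace 𝒜 (J.ksub k) n) : a * t ∈ leadingSpace 𝒜 (J.ksub k) (i + n) := by
  obtain ⟨x, ⟨hxJ, hx⟩, rfl⟩ := ht
  refine ⟨a * x, ⟨J.mul_mem_left _ _ hxJ, ?_⟩, ?_⟩
  · simpa [add_assoc] using mul_mem_degreeLT_left ha hx
  · rw [proj_apply, coe_decompose_mul_of_left_mem_of_le 𝒜 ha (Nat.le_add_right i n),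
      Nat.add_sub_cancel_left, proj_apply]

theorem mul_mem_leadingSpace_right (J : TwoSidedIdeal A) {i n : ℕ} {a t : A}
    (ht : t ∈ leadingSpace 𝒜 (J.ksub k) n) (ha : a ∈ 𝒜 i) :
    t * a ∈ leadingSpace 𝒜 (J.ksub k) (n + i) := by
  obtain ⟨x, ⟨hxJ, hx⟩, rfl⟩ := ht
  refine ⟨x * a, ⟨J.mul_mem_right _ _ hxJ, ?_⟩, ?_⟩
  · simpa [add_right_comm n 1 i] using mul_mem_degreeLT_right hx ha
  · rw [proj_apply, coe_decompose_mul_of_right_mem_of_le 𝒜 ha (Nat.le_add_left i n),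
      Nat.add_sub_cancel, proj_apply]

theorem mul_mem_leadingSubmodule_left (J : TwoSidedIdeal A) (a : A) {b : A}
    (hb : b ∈ leadingSubmodule 𝒜 (J.ksub k)) : a * b ∈ leadingSubmodule 𝒜 (J.ksub k) := by
  induction a using Decomposition.inductionOn 𝒜 with
  | zero => simp
  | @homogeneous i a =>
    refine mem_componentwise.2 fun n ↦ ?_
    by_cases hin : i ≤ n
    · rw [proj_apply, coe_decompose_mul_of_left_mem_of_le 𝒜 a.2 hin, ← proj_apply]
      simpa [Nat.add_sub_cancel' hin] using
        mul_mem_leadingSpace_left J a.2 (mem_componentwise.1 hb (n - i))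
    · rw [proj_apply, coe_decompose_mul_of_left_mem_of_not_le 𝒜 a.2 hin]
      exact zero_mem _
  | add a a' ha ha' => rw [add_mul]; exact add_mem ha ha'

theorem mul_mem_leadingSubmodule_right (J : TwoSidedIdeal A) {a : A}
    (ha : a ∈ leadingSubmodule 𝒜 (J.ksub k)) (b : A) : a * b ∈ leadingSubmodule 𝒜 (J.ksub k) := by
  induction b using Decomposition.inductionOn 𝒜 with
  | zero => simp
  | @homogeneous i b =>
    refine mem_componentwise.2 fun n ↦ ?_
    by_cases hin : i ≤ n
    · rw [proj_apply, coe_decompose_mul_of_right_mem_of_le 𝒜 b.2 hin, ← proj_apply]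
      simpa [Nat.sub_add_cancel hin] using
        mul_mem_leadingSpace_right J (mem_componentwise.1 ha (n - i)) b.2
    · rw [proj_apply, coe_decompose_mul_of_right_mem_of_not_le 𝒜 b.2 hin]
      exact zero_mem _
  | add b b' hb hb' => rw [mul_add]; exact add_mem hb hb'

variable (𝒜) in
def leadingIdeal (J : TwoSidedIdeal A) : TwoSidedIdeal A :=
  .mk' (leadingSubmodule 𝒜 (J.ksub k)) (zero_mem _) add_mem neg_mem
    (mul_mem_leadingSubmodule_left J _) (mul_mem_leadingSubmodule_right J · _)

theorem ksub_leadingIdeal (J : TwoSidedIdeal A) :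
    (leadingIdeal 𝒜 J).ksub k = leadingSubmodule 𝒜 (J.ksub k) :=
  Submodule.ext fun _ ↦ TwoSidedIdeal.mem_mk' ..

theorem decompose_mem_leadingIdeal {J : TwoSidedIdeal A} {x : A} (hx : x ∈ leadingIdeal 𝒜 J)
    (n : ℕ) : (decompose 𝒜 x n : A) ∈ leadingIdeal 𝒜 J := by
  rw [← TwoSidedIdeal.mem_ksub (k := k), ksub_leadingIdeal] at hx ⊢
  exact proj_mem_componentwise hx n

theorem leadingIdeal_ne_bot {J : TwoSidedIdeal A} (hJ : J ≠ ⊥) : leadingIdeal 𝒜 J ≠ ⊥ := by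
  obtain ⟨x, hxJ, hx⟩ : ∃ x ∈ J, x ≠ 0 := by
    by_contra! h
    exact hJ (eq_bot_iff.2 fun x hx ↦ (TwoSidedIdeal.mem_bot A).2 (h x hx))
  obtain ⟨n, hxn, hn⟩ := exists_mem_degreeLT_proj_ne_zero (𝒜 := 𝒜) hx
  have hmem : proj 𝒜 n x ∈ leadingIdeal 𝒜 J := by
    rw [← TwoSidedIdeal.mem_ksub (k := k), ksub_leadingIdeal]
    exact mem_componentwise_of_mem (proj_mem n x) ⟨x, ⟨hxJ, hxn⟩, rfl⟩
  exact fun h ↦ hn ((TwoSidedIdeal.mem_bot A).1 (h ▸ hmem))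

end Algebra

end GradedModule

open GradedModule

theorem projectively_simple_just_infinite_general
    (k : Type*) {A : Type*} [Field k] [Ring A] [Algebra k A]
    (𝒜 : ℕ → Submodule k A) [GradedAlgebra 𝒜]
    (hps : ProjectivelySimple k 𝒜) :
    ¬ FiniteDimensional k A ∧
    ∀ J : TwoSidedIdeal A, J ≠ ⊥ → FiniteDimensional k (A ⧸ J.ksub k) := by
  refine ⟨hps.1, fun J hJ ↦ ?_⟩
  have := hps.2 (leadingIdeal 𝒜 J) (leadingIdeal_ne_bot hJ) fun _ ↦ decompose_mem_leadingIdeal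
  rw [ksub_leadingIdeal] at this
  exact finiteDimensional_quotient_of_leadingSubmodule (𝒜 := 𝒜) _

/-- A `k`-algebra is just infinite dimensional if it is infinite dimensional over `k` and
every nonzero two-sided ideal has finite codimension. -/
theorem projectively_simple_just_infinite
    (k : Type*) {A : Type*} [Field k] [Ring A] [Algebra k A]
    (𝒜 : ℕ → Submodule k A) [GradedAlgebra 𝒜]
    (hlf : ∀ n, FiniteDimensional k (𝒜 n))
    (hm : ∃ n, 1 ≤ n ∧ 𝒜 n ≠ ⊥)
    (hps : ProjectivelySimple k 𝒜) :
    ¬ FiniteDimensional k A ∧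
    ∀ J : TwoSidedIdeal A, J ≠ ⊥ → FiniteDimensional k (A ⧸ J.ksub k) :=
  projectively_simple_just_infinite_general k 𝒜 hps
end

section
/- Let A be a noetherian projectively simple k-algebra and let B be any ℕ-graded k-algebra. Let M be a graded (B,A)-bimodule that is noetherian both as a left B-module and as a right A-module. If M is Goldie torsion as a right A-module, then dim_k M < ∞ (so M is a torsion right A-module). -/
open MulOpposite

section RightModule

variable (A M : Type*) [Ring A] [AddCommGroup M] [Module Aᵐᵒᵖ M]

def IsGoldieTorsion : Prop :=
  ∀ x : M, ∀ J : Submodule Aᵐᵒᵖ A, J ≠ ⊥ → ∃ a ∈ J, a ≠ 0 ∧ op a • x = 0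

def TwoSidedIdeal.annihilator : TwoSidedIdeal A :=
  (TwoSidedIdeal.ker (Module.toAddMonoidEnd Aᵐᵒᵖ M)).unop

variable {A M}

theorem TwoSidedIdeal.mem_annihilator {a : A} :
    a ∈ TwoSidedIdeal.annihilator A M ↔ ∀ m : M, MulOpposite.op a • m = 0 := by
  rw [annihilator, mem_unop_iff, mem_ker, AddMonoid.End.ext_iff]
  rfl

theorem IsGoldieTorsion.exists_ne_zero_forall_smul_eq_zero (h : IsGoldieTorsion A M)
    (s : Finset M) {J : Submodule Aᵐᵒᵖ A} (hJ : J ≠ ⊥) :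
    ∃ a ∈ J, a ≠ 0 ∧ ∀ x ∈ s, op a • x = 0 := by
  classical
  induction s using Finset.induction_on with
  | empty =>
    obtain ⟨a, haJ, ha0⟩ := (Submodule.ne_bot_iff J).mp hJ
    exact ⟨a, haJ, ha0, by simp⟩
  | insert x s _ ih =>
    obtain ⟨a, haJ, ha0, ha⟩ := ih
    have hspan : Submodule.span Aᵐᵒᵖ {a} ≠ ⊥ := by simpa using ha0
    obtain ⟨c, hc, hc0, hcx⟩ := h x _ hspan
    obtain ⟨r, rfl⟩ := Submodule.mem_span_singleton.mp hc
    refine ⟨r • a, J.smul_mem r haJ, hc0,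
      (Finset.forall_mem_insert _ _ _).mpr ⟨hcx, fun y hy => ?_⟩⟩
    rw [smul_eq_mul_unop, op_mul, op_unop, mul_smul, ha y hy, smul_zero]

theorem TwoSidedIdeal.mem_annihilator_of_span_eq_top {B : Type*} [Ring B] [Module B M]
    [SMulCommClass B Aᵐᵒᵖ M] {S : Set M} (hS : Submodule.span B S = ⊤) {a : A}
    (ha : ∀ x ∈ S, MulOpposite.op a • x = 0) : a ∈ TwoSidedIdeal.annihilator A M := by
  have := SMulCommClass.symm B Aᵐᵒᵖ M
  have hzero : DistribSMul.toLinearMap B M (MulOpposite.op a) = 0 := LinearMap.ext_on hS ha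
  exact mem_annihilator.mpr fun m => LinearMap.congr_fun hzero m

end RightModule

section Graded

open DirectSum

variable {k A M : Type*} [Semiring k] [Ring A] [Module k A] [AddCommGroup M] [Module k M]
  [Module Aᵐᵒᵖ M] (𝒜 : ℕ → Submodule k A) [Decomposition 𝒜] (ℳ : ℤ → Submodule k M)
  [Decomposition ℳ]
  (hMA : ∀ (n : ℤ) (j : ℕ), ∀ x ∈ ℳ n, ∀ a ∈ 𝒜 j, op a • x ∈ ℳ (n + (j : ℤ)))
include hMA

theorem coe_decompose_op_smul_of_mem {d : ℤ} {m : M} (hm : m ∈ ℳ d) (a : A) (n : ℕ) :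
    (decompose ℳ (op a • m) (d + n) : M) = op (decompose 𝒜 a n : A) • m := by
  classical
  conv_lhs => rw [← sum_support_decompose 𝒜 a]
  rw [Finset.op_sum, Finset.sum_smul, decompose_sum, DFinsupp.finsetSum_apply,
    Submodule.coe_sum, Finset.sum_eq_single n]
  · exact decompose_of_mem_same ℳ (hMA d n m hm _ (SetLike.coe_mem _))
  · intro j _ hjn
    exact decompose_of_mem_ne ℳ (hMA d j m hm _ (SetLike.coe_mem _)) (by omega)
  · intro hn
    rw [DFinsupp.notMem_support_iff.mp hn]
    simp

theorem isHomogeneous_annihilator : SetLike.IsHomogeneous 𝒜 (TwoSidedIdeal.annihilator A M) := by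
  intro n b hb
  rw [TwoSidedIdeal.mem_annihilator] at hb ⊢
  intro m
  induction m using Decomposition.inductionOn ℳ with
  | zero => exact smul_zero _
  | homogeneous m =>
    rw [← coe_decompose_op_smul_of_mem 𝒜 ℳ hMA m.2, hb, decompose_zero]
    rfl
  | add m m' h h' => rw [smul_add, h, h', add_zero]

end Graded

theorem finiteDimensional_of_annihilator (A : Type*) {k M : Type*} [Field k] [Ring A]
    [Algebra k A] [AddCommGroup M] [Module k M] [Module Aᵐᵒᵖ M] [IsScalarTower k Aᵐᵒᵖ M]
    [Module.Finite Aᵐᵒᵖ M] [FiniteDimensional k (A ⧸ (TwoSidedIdeal.annihilator A M).ksub k)] :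
    FiniteDimensional k M := by
  obtain ⟨T, hT⟩ := Module.Finite.fg_top (R := Aᵐᵒᵖ) (M := M)
  let orbit (x : M) : A →ₗ[k] M :=
    ((LinearMap.toSpanSingleton Aᵐᵒᵖ M x).restrictScalars k).comp
      (MulOpposite.opLinearEquiv k).toLinearMap
  have hker (x : M) : (TwoSidedIdeal.annihilator A M).ksub k ≤ LinearMap.ker (orbit x) :=
    fun a ha => TwoSidedIdeal.mem_annihilator.mp ha x
  have (x : M) : FiniteDimensional k (LinearMap.range (orbit x)) :=
    Submodule.range_liftQ _ (orbit x) (hker x) ▸ LinearMap.finiteDimensional_range _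
  have htop : (⊤ : Submodule k M) ≤ ⨆ x : T, LinearMap.range (orbit x) := by
    intro m _
    obtain ⟨c, -, rfl⟩ := Submodule.mem_span_finset.mp (hT ▸ Submodule.mem_top : m ∈ _)
    exact Submodule.sum_mem _ fun x hx => Submodule.mem_iSup_of_mem ⟨x, hx⟩ ⟨(c x).unop, rfl⟩
  have := Submodule.finiteDimensional_of_le htop
  exact Submodule.topEquiv.finiteDimensional

theorem goldie_torsion_bimodule_finite_dimensional_general
    (k : Type*) [Field k]
    -- `A`: a noetherian (on both sides) projectively simple graded `k`-algebra
    {A : Type*} [Ring A] [Algebra k A]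
    (𝒜 : ℕ → Submodule k A) [GradedAlgebra 𝒜]
    (hps : ProjectivelySimple k 𝒜)
    -- `B`: any ℕ-graded `k`-algebra
    {B : Type*} [Ring B]
    -- `M`: a graded `(B,A)`-bimodule
    {M : Type*} [AddCommGroup M] [Module k M]
    [Module B M]
    [Module Aᵐᵒᵖ M] [IsScalarTower k Aᵐᵒᵖ M]
    [SMulCommClass B Aᵐᵒᵖ M]
    (ℳ : ℤ → Submodule k M) [DirectSum.Decomposition ℳ]
    (hMA : ∀ (n : ℤ) (j : ℕ), ∀ x ∈ ℳ n, ∀ a ∈ 𝒜 j, MulOpposite.op a • x ∈ ℳ (n + (j : ℤ)))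
    -- noetherian on both sides
    (hNoethBM : IsNoetherian B M) (hNoethMA : IsNoetherian Aᵐᵒᵖ M)
    -- Goldie torsion as a right `A`-module
    (hGoldie : ∀ x : M, ∀ J : Submodule Aᵐᵒᵖ A, J ≠ ⊥ →
        ∃ a : A, a ∈ J ∧ a ≠ 0 ∧ MulOpposite.op a • x = 0) :
    FiniteDimensional k M := by
  have : Nontrivial A := not_subsingleton_iff_nontrivial.mp fun _ => hps.1 inferInstance
  obtain ⟨S, hS⟩ := Module.Finite.fg_top (R := B) (M := M)
  obtain ⟨a, -, ha0, ha⟩ :=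
    IsGoldieTorsion.exists_ne_zero_forall_smul_eq_zero hGoldie S (J := ⊤) top_ne_bot
  have haM := TwoSidedIdeal.mem_annihilator_of_span_eq_top hS ha
  have hann : TwoSidedIdeal.annihilator A M ≠ ⊥ := fun h =>
    ha0 <| (TwoSidedIdeal.mem_bot _).mp <| h ▸ haM
  have := hps.2 _ hann fun b hb n => isHomogeneous_annihilator 𝒜 ℳ hMA n hb
  exact finiteDimensional_of_annihilator A

theorem goldie_torsion_bimodule_finite_dimensional
    (k : Type*) [Field k]
    -- `A`: a noetherian (on both sides) projectively simple graded `k`-algebra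
    {A : Type*} [Ring A] [Algebra k A]
    (𝒜 : ℕ → Submodule k A) [GradedAlgebra 𝒜]
    (hlfA : ∀ n, FiniteDimensional k (𝒜 n))
    (hNoethA : IsNoetherianRing A) (hNoethAop : IsNoetherianRing Aᵐᵒᵖ)
    (hps : ProjectivelySimple k 𝒜)
    -- `B`: any ℕ-graded `k`-algebra
    {B : Type*} [Ring B] [Algebra k B]
    (ℬ : ℕ → Submodule k B) [GradedAlgebra ℬ]
    -- `M`: a graded `(B,A)`-bimodule
    {M : Type*} [AddCommGroup M] [Module k M]
    [Module B M] [IsScalarTower k B M]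
    [Module Aᵐᵒᵖ M] [IsScalarTower k Aᵐᵒᵖ M]
    [SMulCommClass B Aᵐᵒᵖ M]
    (ℳ : ℤ → Submodule k M) [DirectSum.Decomposition ℳ]
    (hBM : ∀ (i : ℕ) (n : ℤ), ∀ b ∈ ℬ i, ∀ x ∈ ℳ n, b • x ∈ ℳ ((i : ℤ) + n))
    (hMA : ∀ (n : ℤ) (j : ℕ), ∀ x ∈ ℳ n, ∀ a ∈ 𝒜 j, MulOpposite.op a • x ∈ ℳ (n + (j : ℤ)))
    -- noetherian on both sides
    (hNoethBM : IsNoetherian B M) (hNoethMA : IsNoetherian Aᵐᵒᵖ M)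
    -- Goldie torsion as a right `A`-module
    (hGoldie : ∀ x : M, ∀ J : Submodule Aᵐᵒᵖ A, J ≠ ⊥ →
        ∃ a : A, a ∈ J ∧ a ≠ 0 ∧ MulOpposite.op a • x = 0) :
    FiniteDimensional k M :=
  goldie_torsion_bimodule_finite_dimensional_general k 𝒜 hps ℳ hMA hNoethBM hNoethMA hGoldie
end

section
/- Let X be a nonempty topological space having exactly m irreducible components X_1, …, X_m, and let σ : X → X be a homeomorphism. Then σ is wild if and only if the permutation of {X_1, …, X_m} induced by σ is a single m-cycle and σ^m restricts to a wild homeomorphism of each component X_i. Moreover, if σ is wild then the components X_1, …, X_m are pairwise disjoint. -/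
/-!
If `σ` is wild and `s` is a nonempty closed set with `σⁿ(s) = s` for some `n > 0`, then
`s ∪ σ(s) ∪ ⋯ ∪ σⁿ⁻¹(s)` is closed and `σ`-invariant, hence all of `X`; so every irreducible
set lies in a single `σᵗ(s)`. Some power of `σ` fixes each of the finitely many components, and
taking for `s` a component, the intersection of two components, or a `σᵐ`-invariant closed
subset of a component yields transitivity, disjointness and wildness of `σᵐ` on components.
Conversely a transitive permutation of `m` objects has `m`-th power the identity, so if `Y` is
closed, `σ`-invariant and meets `Xᵢ`, wildness of `σᵐ` on `Xᵢ` forces `Xᵢ ⊆ Y`, and then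
`Y ⊇ σᵗ(Xᵢ)` for all `t` gives `Y = X`.

A permutation of `m` objects is a single `m`-cycle iff it is transitive; this is how the cycle
condition is expressed.
-/

/-- A self-map of `X` is *wild on `S`* if it moves every closed set `Y` with
`∅ ≠ Y ⊊ S`. -/
def WildOn {X : Type*} [TopologicalSpace X] (f : X → X) (S : Set X) : Prop :=
  ∀ Y : Set X, Y ⊆ S → IsClosed Y → Y.Nonempty → Y ≠ S → f '' Y ≠ Y

/-- A homeomorphism `σ : X ≃ₜ X` is *wild* if `σ(Y) ≠ Y` for every closed set `Y` with
`∅ ≠ Y ⊊ X`. -/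
def IsWild {X : Type*} [TopologicalSpace X] (σ : X ≃ₜ X) : Prop :=
  WildOn σ Set.univ

open Function Set

theorem Function.minimalPeriod_eq_card_of_forall_exists_iterate_eq {α : Type*} [Fintype α]
    {f : α → α} (hf : Injective f) {x : α} (h : ∀ y, ∃ t, f^[t] x = y) :
    minimalPeriod f x = Fintype.card α := by
  refine le_antisymm minimalPeriod_le_card ?_
  have hpos := minimalPeriod_pos_of_mem_periodicPts (hf.mem_periodicPts x)
  calc Fintype.card α ≤ Fintype.card (Fin (minimalPeriod f x)) :=
        Fintype.card_le_of_surjective (fun k : Fin _ => f^[k] x) fun y => by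
          obtain ⟨t, rfl⟩ := h y
          exact ⟨⟨t % _, Nat.mod_lt _ hpos⟩, iterate_mod_minimalPeriod_eq⟩
    _ = minimalPeriod f x := Fintype.card_fin _

namespace Homeomorph

variable {X : Type*} [TopologicalSpace X]

theorem isClosed_image_iterate (σ : X ≃ₜ X) (t : ℕ) {s : Set X} (hs : IsClosed s) :
    IsClosed (σ^[t] '' s) := by
  rw [image_eq_preimage_of_inverse (LeftInverse.iterate (g := σ.symm) σ.symm_apply_apply t)
    (LeftInverse.iterate (f := σ.symm) σ.apply_symm_apply t)]
  exact hs.preimage (σ.symm.continuous.iterate t)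

theorem image_mem_irreducibleComponents (σ : X ≃ₜ X) {Z : Set X}
    (hZ : Z ∈ irreducibleComponents X) : σ '' Z ∈ irreducibleComponents X :=
  image_mem_irreducibleComponents_of_isPreirreducible_fiber σ σ.continuous σ.isOpenMap
    (fun _ => (subsingleton_singleton.preimage σ.injective).isPreirreducible) σ.surjective hZ

theorem image_iterate_mem_irreducibleComponents (σ : X ≃ₜ X) (t : ℕ) {Z : Set X}
    (hZ : Z ∈ irreducibleComponents X) : σ^[t] '' Z ∈ irreducibleComponents X := by
  induction t with
  | zero => simpa
  | succ t ih => rw [iterate_succ', image_comp]; exact σ.image_mem_irreducibleComponents ih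

theorem exists_perm_semiconj_image {ι : Type*} {C : ι → Set X} (hCinj : Injective C)
    (hC : range C = irreducibleComponents X) (σ : X ≃ₜ X) :
    ∃ π : Equiv.Perm ι, Semiconj C π (Set.image σ) := by
  have hmaps (τ : X ≃ₜ X) (i : ι) : ∃ j, C j = τ '' C i := by
    rw [← mem_range, hC]
    exact τ.image_mem_irreducibleComponents (hC ▸ mem_range_self i)
  choose p hp using hmaps
  refine ⟨⟨p σ, p σ.symm, fun i => hCinj ?_, fun i => hCinj ?_⟩, hp σ⟩
  all_goals rw [hp, hp, image_image]; simp

end Homeomorph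

namespace IsWild

variable {X : Type*} [TopologicalSpace X] {σ : X ≃ₜ X}

theorem iUnion_image_iterate_eq_univ (hσ : IsWild σ) {s : Set X} (hs : IsClosed s)
    (hne : s.Nonempty) {n : ℕ} (hn : 0 < n) (hper : σ^[n] '' s = s) :
    ⋃ t ∈ Finset.range n, σ^[t] '' s = univ := by
  have hsucc (t : ℕ) : σ '' (σ^[t] '' s) = σ^[t + 1] '' s := by rw [iterate_succ', image_comp]
  have hmod (t : ℕ) : σ^[t % n] '' s = σ^[t] '' s := by
    have : IsPeriodicPt (image σ) n s := by rwa [IsPeriodicPt, IsFixedPt, ← image_iterate_eq]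
    simpa only [image_iterate_eq] using this.iterate_mod_apply t
  by_contra hne_univ
  refine hσ _ (subset_univ _)
    ((Finset.range n).finite_toSet.isClosed_biUnion fun t _ => σ.isClosed_image_iterate t hs)
    ((by simpa using hne : (σ^[0] '' s).Nonempty).mono
      (subset_biUnion_of_mem (u := fun t => σ^[t] '' s) (Finset.mem_range.2 hn)))
    hne_univ ?_
  simp only [image_iUnion₂, hsucc]
  refine Subset.antisymm (iUnion₂_subset fun t _ => ?_) (iUnion₂_subset fun t ht => ?_)
  · rw [← hmod]
    exact subset_biUnion_of_mem (u := fun t => σ^[t] '' s)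
      (Finset.mem_range.2 (Nat.mod_lt _ hn))
  · rcases t with _ | k
    · have hlast : σ^[n - 1 + 1] '' s = s := by rw [Nat.sub_add_cancel hn, hper]
      simpa only [iterate_zero, image_id, hlast] using subset_biUnion_of_mem
        (u := fun t => σ^[t + 1] '' s) (Finset.mem_range.2 (Nat.sub_lt hn one_pos))
    · exact subset_biUnion_of_mem (u := fun t => σ^[t + 1] '' s)
        (Finset.mem_range.2 (by simp at ht; omega))

theorem exists_subset_image_iterate (hσ : IsWild σ) {s : Set X} (hs : IsClosed s)
    (hne : s.Nonempty) {n : ℕ} (hn : 0 < n) (hper : σ^[n] '' s = s) {Z : Set X}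
    (hZ : IsIrreducible Z) : ∃ t, Z ⊆ σ^[t] '' s := by
  obtain ⟨_, hmem, hsub⟩ := isIrreducible_iff_sUnion_isClosed.mp hZ
    ((Finset.range n).image fun t => σ^[t] '' s)
    (by simpa using fun t _ => σ.isClosed_image_iterate t hs)
    (by simp only [Finset.coe_image, sUnion_image, Finset.mem_coe,
      hσ.iUnion_image_iterate_eq_univ hs hne hn hper, subset_univ])
  obtain ⟨t, -, rfl⟩ := Finset.mem_image.mp hmem
  exact ⟨t, hsub⟩

theorem wildOn_iterate (hσ : IsWild σ) {n : ℕ} (hn : 0 < n) {Z : Set X}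
    (hZ : Z ∈ irreducibleComponents X) : WildOn σ^[n] Z := by
  intro Y hYZ hY hYne hYneZ hper
  obtain ⟨t, hZt⟩ := hσ.exists_subset_image_iterate hY hYne hn hper hZ.1
  have hZeq : Z = σ^[t] '' Z := hZ.eq_of_subset
    (σ.image_iterate_mem_irreducibleComponents t hZ).1 (hZt.trans (image_mono hYZ))
  rw [hZeq, image_subset_image_iff (σ.injective.iterate t)] at hZt
  exact hYneZ (hYZ.antisymm hZt)

theorem exists_image_iterate_eq (hσ : IsWild σ) {Z W : Set X}
    (hZ : Z ∈ irreducibleComponents X) (hW : W ∈ irreducibleComponents X) {n : ℕ} (hn : 0 < n)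
    (hper : σ^[n] '' Z = Z) : ∃ t, σ^[t] '' Z = W := by
  obtain ⟨t, hWt⟩ := hσ.exists_subset_image_iterate
    (isClosed_of_mem_irreducibleComponents Z hZ) hZ.1.1 hn hper hW.1
  exact ⟨t, (hW.eq_of_subset (σ.image_iterate_mem_irreducibleComponents t hZ).1 hWt).symm⟩

theorem disjoint_of_mem_irreducibleComponents (hσ : IsWild σ) {Z W : Set X}
    (hZ : Z ∈ irreducibleComponents X) (hW : W ∈ irreducibleComponents X) (hZW : Z ≠ W)
    {n : ℕ} (hn : 0 < n) (hperZ : σ^[n] '' Z = Z) (hperW : σ^[n] '' W = W) :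
    Disjoint Z W := by
  rw [disjoint_iff_inter_eq_empty, ← not_nonempty_iff_eq_empty]
  intro hne
  have hper : σ^[n] '' (Z ∩ W) = Z ∩ W := by
    rw [image_inter (σ.injective.iterate n), hperZ, hperW]
  obtain ⟨t, hZt⟩ := hσ.exists_subset_image_iterate
    ((isClosed_of_mem_irreducibleComponents Z hZ).inter
      (isClosed_of_mem_irreducibleComponents W hW)) hne hn hper hZ.1
  have hsub := hZt.trans (image_inter_subset _ _ _)
  have hZeq := hZ.eq_of_subset (σ.image_iterate_mem_irreducibleComponents t hZ).1
    (hsub.trans inter_subset_left)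
  have hWeq := hZ.eq_of_subset (σ.image_iterate_mem_irreducibleComponents t hW).1
    (hsub.trans inter_subset_right)
  exact hZW ((σ.injective.iterate t).image_injective (hZeq.symm.trans hWeq))

theorem of_wildOn_iterate {ι : Type*} {C : ι → Set X} (hcover : ⋃ i, C i = univ)
    (hC : ∀ i, IsClosed (C i)) {n : ℕ} (hper : ∀ i, σ^[n] '' C i = C i)
    (htrans : ∀ i j, ∃ t, σ^[t] '' C i = C j) (hwild : ∀ i, WildOn σ^[n] (C i)) :
    IsWild σ := by
  rintro Y - hY hYne hYne_univ hinv
  have hYiter (t : ℕ) : σ^[t] '' Y = Y := by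
    rw [image_iterate_eq]
    exact IsFixedPt.iterate (f := Set.image σ) hinv t
  obtain ⟨y, hy⟩ := hYne
  obtain ⟨i, hyi⟩ := mem_iUnion.mp (hcover.symm ▸ mem_univ y : y ∈ ⋃ i, C i)
  have hCiY : C i ⊆ Y := by
    by_contra hCiY
    refine hwild i (Y ∩ C i) inter_subset_right (hY.inter (hC i)) ⟨y, hy, hyi⟩
      (fun h => hCiY (h ▸ inter_subset_left)) ?_
    rw [image_inter (σ.injective.iterate n), hYiter, hper]
  refine hYne_univ (eq_univ_of_univ_subset (hcover ▸ iUnion_subset fun j => ?_))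
  obtain ⟨t, ht⟩ := htrans i j
  exact ht ▸ (image_mono hCiY).trans (hYiter t).subset

end IsWild

theorem wild_iff_cycle_and_wild_on_components_general
    {X : Type*} [TopologicalSpace X]
    (m : ℕ) (hm : 0 < m) (C : Fin m → Set X)
    (hCinj : Function.Injective C)
    (hC : Set.range C = irreducibleComponents X)
    (σ : X ≃ₜ X) :
    (IsWild σ ↔
      ((∀ i j : Fin m, ∃ t : ℕ, (⇑σ)^[t] '' C i = C j) ∧
        ∀ i : Fin m, WildOn ((⇑σ)^[m]) (C i))) ∧
    (IsWild σ → ∀ i j : Fin m, i ≠ j → Disjoint (C i) (C j)) := by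
  have hcomp (i : Fin m) : C i ∈ irreducibleComponents X := hC ▸ mem_range_self i
  obtain ⟨π, hπ⟩ := σ.exists_perm_semiconj_image hCinj hC
  have hiter (t : ℕ) (i : Fin m) : σ^[t] '' C i = C (π^[t] i) := by
    rw [image_iterate_eq, (hπ.iterate_right t).eq]
  have hper (i : Fin m) : σ^[orderOf π] '' C i = C i := by
    rw [hiter, Equiv.Perm.iterate_eq_pow, pow_orderOf_eq_one, Equiv.Perm.one_apply]
  refine ⟨⟨fun hσ => ⟨fun i j => hσ.exists_image_iterate_eq (hcomp i) (hcomp j)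
      (orderOf_pos π) (hper i), fun i => hσ.wildOn_iterate hm (hcomp i)⟩, ?_⟩,
    fun hσ i j hij => hσ.disjoint_of_mem_irreducibleComponents (hcomp i) (hcomp j)
      (hCinj.ne hij) (orderOf_pos π) (hper i) (hper j)⟩
  rintro ⟨htrans, hwild⟩
  have hcycle (i : Fin m) : π^[m] i = i := by
    have hperiod := minimalPeriod_eq_card_of_forall_exists_iterate_eq π.injective fun j =>
      (htrans i j).imp fun t ht => hCinj ((hiter t i).symm.trans ht)
    rw [Fintype.card_fin] at hperiod
    simpa only [hperiod] using iterate_minimalPeriod (f := π) (x := i)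
  exact IsWild.of_wildOn_iterate (by rw [← sUnion_range, hC, sUnion_irreducibleComponents])
    (fun i => isClosed_of_mem_irreducibleComponents _ (hcomp i))
    (fun i => by rw [hiter, hcycle]) htrans hwild

theorem wild_iff_cycle_and_wild_on_components
    {X : Type*} [TopologicalSpace X] [Nonempty X]
    (m : ℕ) (hm : 0 < m) (C : Fin m → Set X)
    (hCinj : Function.Injective C)
    (hC : Set.range C = irreducibleComponents X)
    (σ : X ≃ₜ X) :
    (IsWild σ ↔
      ((∀ i j : Fin m, ∃ t : ℕ, (⇑σ)^[t] '' C i = C j) ∧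
        ∀ i : Fin m, WildOn ((⇑σ)^[m]) (C i))) ∧
    (IsWild σ → ∀ i j : Fin m, i ≠ j → Disjoint (C i) (C j)) :=
  wild_iff_cycle_and_wild_on_components_general m hm C hCinj hC σ
end

section
/- Let X be an irreducible topological space and σ : X → X a homeomorphism. Then σ is wild if and only if σ^n is wild for every integer n ≥ 1. -/
/-!
STATEMENT 11: Let `X` be an irreducible topological space and `σ : X → X` a
homeomorphism.  Then `σ` is wild iff `σ^n` (the `n`-th iterate of `σ`) is wild for
every integer `n ≥ 1`.
-/

/-- A self-map `f` of a topological space `X` is *wild* if `f(Y) ≠ Y` for every closed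
set `Y` with `∅ ≠ Y ⊊ X`. -/
def IsWildMap {X : Type*} [TopologicalSpace X] (f : X → X) : Prop :=
  ∀ Y : Set X, IsClosed Y → Y.Nonempty → Y ≠ Set.univ → f '' Y ≠ Y

theorem wild_iff_powers_wild
    {X : Type*} [TopologicalSpace X] [IrreducibleSpace X] (σ : X ≃ₜ X) :
    IsWildMap (⇑σ) ↔ ∀ n : ℕ, 1 ≤ n → IsWildMap ((⇑σ)^[n]) := by
  constructor
  · intro hσ n hn Y hYc hYne hYu hfix
    -- Consider Z = ⋃ i < n, σ^[i] '' Y.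
    set Z : Set X := ⋃ i ∈ Finset.range n, (⇑σ)^[i] '' Y with hZdef
    classical
    have hclosed : ∀ i : ℕ, IsClosed ((⇑σ)^[i] '' Y) := by
      intro i
      induction i with
      | zero => simpa using hYc
      | succ k ih =>
        rw [Function.iterate_succ', Set.image_comp]
        exact σ.isClosedMap _ ih
    have hZc : IsClosed Z := by
      apply Set.Finite.isClosed_biUnion (Finset.finite_toSet _)
      intro i _; exact hclosed i
    have hZne : Z.Nonempty := by
      obtain ⟨y, hy⟩ := hYne
      exact ⟨y, Set.mem_biUnion (Finset.mem_range.mpr hn) ⟨y, hy, by simp⟩⟩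
    -- σ '' Z = Z
    have hσZ : ⇑σ '' Z = Z := by
      have himg : ∀ i : ℕ, ⇑σ '' ((⇑σ)^[i] '' Y) = (⇑σ)^[i + 1] '' Y := by
        intro i
        rw [← Set.image_comp, ← Function.iterate_succ' (⇑σ) i]
      apply Set.Subset.antisymm
      · rintro _ ⟨x, hx, rfl⟩
        simp only [hZdef, Set.mem_iUnion, Finset.mem_range] at hx ⊢
        obtain ⟨i, hi, hxi⟩ := hx
        rcases Nat.lt_or_ge (i + 1) n with h | h
        · exact ⟨i + 1, h, by rw [← himg i]; exact Set.mem_image_of_mem _ hxi⟩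
        · have : i + 1 = n := le_antisymm (Nat.succ_le_of_lt hi) h
          refine ⟨0, by omega, ?_⟩
          have : σ x ∈ (⇑σ)^[n] '' Y := by
            rw [← this, ← himg i]; exact Set.mem_image_of_mem _ hxi
          rw [hfix] at this
          simpa using this
      · intro x hx
        simp only [hZdef, Set.mem_iUnion, Finset.mem_range] at hx
        obtain ⟨i, hi, hxi⟩ := hx
        rcases Nat.eq_zero_or_pos i with rfl | hpos
        · -- x ∈ Y = σ^[n] '' Y = σ '' (σ^[n-1] '' Y)
          have hx' : x ∈ (⇑σ)^[n] '' Y := by rw [hfix]; simpa using hxi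
          have : x ∈ ⇑σ '' ((⇑σ)^[n - 1] '' Y) := by
            rw [himg (n - 1), Nat.sub_add_cancel hn]; exact hx'
          obtain ⟨y, hy, rfl⟩ := this
          exact Set.mem_image_of_mem _
            (Set.mem_biUnion (Finset.mem_range.mpr (by omega)) hy)
        · have : x ∈ ⇑σ '' ((⇑σ)^[i - 1] '' Y) := by
            rw [himg (i - 1), Nat.sub_add_cancel hpos]; simpa using hxi
          obtain ⟨y, hy, rfl⟩ := this
          exact Set.mem_image_of_mem _
            (Set.mem_biUnion (Finset.mem_range.mpr (by omega)) hy)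
    have hZu : Z = Set.univ := by
      by_contra h
      exact hσ Z hZc hZne h hσZ
    -- irreducibility: univ covered by finitely many closed sets, one is univ
    have hirr : IsIrreducible (Set.univ : Set X) :=
      IrreducibleSpace.isIrreducible_univ X
    rw [isIrreducible_iff_sUnion_isClosed] at hirr
    obtain ⟨z, hz, hsub⟩ := hirr ((Finset.range n).image (fun i => (⇑σ)^[i] '' Y))
      (by
        intro z hz
        simp only [Finset.mem_image, Finset.mem_range] at hz
        obtain ⟨i, _, rfl⟩ := hz
        exact hclosed i)
      (by
        rw [← hZu]
        intro x hx
        simp only [hZdef, Set.mem_iUnion, Finset.mem_range] at hx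
        obtain ⟨i, hi, hxi⟩ := hx
        exact ⟨(⇑σ)^[i] '' Y, by simp [Finset.mem_image]; exact ⟨i, hi, rfl⟩, hxi⟩)
    simp only [Finset.mem_image, Finset.mem_range] at hz
    obtain ⟨i, _, rfl⟩ := hz
    have : (⇑σ)^[i] '' Y = Set.univ := Set.eq_univ_of_univ_subset hsub
    have hYuniv : Y = Set.univ := by
      have hbij : Function.Bijective ((⇑σ)^[i]) := (σ.bijective).iterate i
      have := congrArg (fun s => (⇑σ)^[i] ⁻¹' s) this
      simpa [Set.preimage_image_eq _ hbij.injective, Set.preimage_univ] using this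
    exact hYu hYuniv
  · intro h Y hYc hYne hYu
    have := h 1 le_rfl Y hYc hYne hYu
    simpa using this
end

section
/- Let k be a field of characteristic zero, let W_0, W_1, …, W_N be finite-dimensional k-vector spaces, and for each q let f_q : W_q → W_q be a linear automorphism. Suppose that the alternating trace sums L(n) = Σ_{q=0}^{N} (−1)^q · trace(f_q^n) vanish for every integer n ≥ 1. Then Σ_{q=0}^{N} (−1)^q · dim_k W_q = 0. -/
/-!
STATEMENT 12: Let `k` be a field of characteristic zero, `W_0, …, W_N` finite-dimensional
`k`-vector spaces and `f_q : W_q → W_q` linear automorphisms.  If the alternating trace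
sums `L(n) = Σ_q (−1)^q · trace(f_q^n)` vanish for every `n ≥ 1`, then
`Σ_q (−1)^q · dim_k W_q = 0`.
-/

theorem alternating_dim_sum_eq_zero_of_lefschetz_numbers_vanish
    {k : Type*} [Field k] [CharZero k] {N : ℕ}
    (W : Fin (N + 1) → Type*)
    [∀ q, AddCommGroup (W q)] [∀ q, Module k (W q)]
    [∀ q, FiniteDimensional k (W q)]
    (f : ∀ q, W q ≃ₗ[k] W q)
    (h : ∀ n : ℕ, 1 ≤ n →
      (∑ q : Fin (N + 1),
        (-1 : k) ^ (q : ℕ) * LinearMap.trace k (W q) ((f q).toLinearMap ^ n)) = 0) :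
    (∑ q : Fin (N + 1), (-1 : ℤ) ^ (q : ℕ) * (Module.finrank k (W q) : ℤ)) = 0 := by
  classical
  set P : Polynomial k := ∏ q : Fin (N + 1), ((f q).toLinearMap).charpoly with hP
  -- Cayley–Hamilton: each `f q` is annihilated by `P`
  have hPaeval : ∀ q, Polynomial.aeval (f q).toLinearMap P = 0 := by
    intro q
    rw [hP, ← Finset.prod_erase_mul _ _ (Finset.mem_univ q), map_mul,
      LinearMap.aeval_self_charpoly, mul_zero]
  -- the constant coefficient of `P` is nonzero
  have hc0 : P.coeff 0 ≠ 0 := by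
    have hq : ∀ q : Fin (N + 1), ((f q).toLinearMap).charpoly.coeff 0 ≠ 0 := by
      intro q
      have hdet := (f q).isUnit_det'.ne_zero
      rw [LinearMap.det_eq_sign_charpoly_coeff] at hdet
      intro h0
      rw [h0, mul_zero] at hdet
      exact hdet rfl
    have hPc : P.coeff 0 = ∏ q : Fin (N + 1), ((f q).toLinearMap).charpoly.coeff 0 := by
      simp [hP, Polynomial.coeff_zero_eq_eval_zero, Polynomial.eval_prod]
    rw [hPc]
    exact Finset.prod_ne_zero_iff.2 fun q _ => hq q
  -- taking traces of `aeval (f q) P = 0`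
  have key : ∀ q : Fin (N + 1),
      ∑ i ∈ Finset.range (P.natDegree + 1),
        P.coeff i * LinearMap.trace k (W q) ((f q).toLinearMap ^ i) = 0 := by
    intro q
    have h1 := congrArg (LinearMap.trace k (W q)) (hPaeval q)
    rw [Polynomial.aeval_eq_sum_range] at h1
    simpa [map_sum, smul_eq_mul] using h1
  -- alternating sum over q, then swap the order of summation
  have hswap :
      ∑ i ∈ Finset.range (P.natDegree + 1),
        P.coeff i * ∑ q : Fin (N + 1),
          (-1 : k) ^ (q : ℕ) * LinearMap.trace k (W q) ((f q).toLinearMap ^ i) = 0 := by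
    calc ∑ i ∈ Finset.range (P.natDegree + 1),
          P.coeff i * ∑ q : Fin (N + 1),
            (-1 : k) ^ (q : ℕ) * LinearMap.trace k (W q) ((f q).toLinearMap ^ i)
        = ∑ q : Fin (N + 1), (-1 : k) ^ (q : ℕ) *
            ∑ i ∈ Finset.range (P.natDegree + 1),
              P.coeff i * LinearMap.trace k (W q) ((f q).toLinearMap ^ i) := by
          simp_rw [Finset.mul_sum]
          rw [Finset.sum_comm]
          exact Finset.sum_congr rfl fun q _ => Finset.sum_congr rfl fun i _ => by ring
      _ = 0 := by simp [key]
  -- all terms with i ≥ 1 vanish by hypothesis, leaving the i = 0 term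
  have h0 : P.coeff 0 * ∑ q : Fin (N + 1),
      (-1 : k) ^ (q : ℕ) * LinearMap.trace k (W q) ((f q).toLinearMap ^ 0) = 0 := by
    rw [Finset.sum_range_succ'] at hswap
    have hz : ∑ i ∈ Finset.range P.natDegree,
        P.coeff (i + 1) * ∑ q : Fin (N + 1),
          (-1 : k) ^ (q : ℕ) * LinearMap.trace k (W q) ((f q).toLinearMap ^ (i + 1)) = 0 := by
      refine Finset.sum_eq_zero fun i _ => ?_
      rw [h (i + 1) (Nat.succ_le_succ (Nat.zero_le _)), mul_zero]
    rw [hz, zero_add] at hswap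
    exact hswap
  have hL0 : ∑ q : Fin (N + 1),
      (-1 : k) ^ (q : ℕ) * LinearMap.trace k (W q) ((f q).toLinearMap ^ 0) = 0 :=
    (mul_eq_zero.1 h0).resolve_left hc0
  have hk : (∑ q : Fin (N + 1), (-1 : k) ^ (q : ℕ) * (Module.finrank k (W q) : k)) = 0 := by
    simpa [LinearMap.trace_one] using hL0
  have hcast : ((∑ q : Fin (N + 1),
      (-1 : ℤ) ^ (q : ℕ) * (Module.finrank k (W q) : ℤ) : ℤ) : k) = 0 := by
    push_cast
    exact hk
  exact_mod_cast hcast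
end

section
/- Let F_1, …, F_h be (commutative) fields of characteristic zero, fix positive integers n_1, …, n_h, and let M be an invertible element of the product ring R = M_{n_1}(F_1) × ⋯ × M_{n_h}(F_h). (i) If there exist integers 0 < p < q such that M^p is conjugate to M^q in R, then M is quasi-unipotent. (ii) If M is conjugate to M^p in R for every integer p ≥ 1, then M is unipotent. -/
/-!
Over an algebraic closure, conjugate matrices have the same spectrum and `σ(A ^ k) = σ(A) ^ k`,
so the finite spectrum `S` of an invertible `A` with `A ^ p ∼ A ^ q` satisfies `S ^ q ⊆ S ^ p`.
Iterating, each `x ∈ S` gives `y_k ∈ S` with `y_k ^ (p ^ k) = x ^ (q ^ k)`; a repetition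
`y_a = y_b` forces `y_a`, hence `x`, to be a root of unity. So `A ^ s` has spectrum `{1}` for some
`s ≥ 1`, i.e. `A ^ s - 1` is nilpotent; in a finite product take a common multiple of the `s`.
For (ii), `M ∼ M ^ s` with `M ^ s` unipotent.
-/

open Polynomial

theorem isConj_of_eq_units_conj {M : Type*} [Monoid M] {a b : M} (u : Mˣ)
    (h : b = u * a * ↑u⁻¹) : IsConj a b :=
  ⟨u, by rw [SemiconjBy, h, Units.inv_mul_cancel_right]⟩

theorem IsConj.eq_units_conj {M : Type*} [Monoid M] {a b : M} (h : IsConj a b) :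
    ∃ u : Mˣ, b = u * a * ↑u⁻¹ := by
  obtain ⟨u, hu⟩ := h
  exact ⟨u, (Units.eq_mul_inv_iff_mul_eq u).2 hu.eq.symm⟩

theorem IsConj.spectrum_eq {K A : Type*} [CommSemiring K] [Ring A] [Algebra K A] {a b : A}
    (h : IsConj a b) : spectrum K a = spectrum K b := by
  obtain ⟨u, rfl⟩ := h.eq_units_conj
  exact spectrum.units_conjugate.symm

section Unipotent

variable {R : Type*} [Ring R]

def IsUnipotent (x : R) : Prop := IsNilpotent (x - 1)

def IsQuasiUnipotent (x : R) : Prop := ∃ s : ℕ, 1 ≤ s ∧ IsUnipotent (x ^ s)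

theorem IsUnipotent.pow {x : R} (hx : IsUnipotent x) (n : ℕ) : IsUnipotent (x ^ n) := by
  unfold IsUnipotent
  rw [← geom_sum_mul x n]
  exact Commute.isNilpotent_mul_left
    ((Commute.sum_left _ _ _ fun i _ => (Commute.refl x).pow_left i).sub_right (.one_right _)) hx

theorem IsUnipotent.of_isConj {x y : R} (hx : IsUnipotent x) (h : IsConj x y) :
    IsUnipotent y := by
  obtain ⟨u, rfl⟩ := h.eq_units_conj
  obtain ⟨n, hn⟩ := hx
  have hconj : ↑u * x * ↑u⁻¹ - 1 = ↑u * (x - 1) * ↑u⁻¹ := by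
    rw [mul_sub, sub_mul, mul_one, Units.mul_inv]
  exact ⟨n, by rw [hconj, Units.conj_pow, hn, mul_zero, zero_mul]⟩

theorem IsQuasiUnipotent.of_map {S : Type*} [Ring S] {f : R →+* S} (hf : Function.Injective f)
    {x : R} (h : IsQuasiUnipotent (f x)) : IsQuasiUnipotent x := by
  obtain ⟨s, hs, hn⟩ := h
  refine ⟨s, hs, (IsNilpotent.map_iff hf).1 ?_⟩
  simpa only [IsUnipotent, map_sub, map_pow, map_one] using hn

end Unipotent

theorem Pi.isNilpotent_of_forall {ι : Type*} [Finite ι] {M₀ : ι → Type*}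
    [∀ i, MonoidWithZero (M₀ i)] {x : ∀ i, M₀ i} (h : ∀ i, IsNilpotent (x i)) :
    IsNilpotent x := by
  cases nonempty_fintype ι
  choose n hn using h
  exact ⟨∑ i, n i, funext fun i =>
    pow_eq_zero_of_le (Finset.single_le_sum (fun j _ => Nat.zero_le (n j)) (Finset.mem_univ i))
      (hn i)⟩

theorem Pi.isQuasiUnipotent_of_forall {ι : Type*} [Finite ι] {R : ι → Type*} [∀ i, Ring (R i)]
    {x : ∀ i, R i} (h : ∀ i, IsQuasiUnipotent (x i)) : IsQuasiUnipotent x := by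
  cases nonempty_fintype ι
  choose s hs hu using h
  refine ⟨∏ i, s i, Finset.one_le_prod' fun i _ => hs i, Pi.isNilpotent_of_forall fun i => ?_⟩
  obtain ⟨d, hd⟩ := Finset.dvd_prod_of_mem s (Finset.mem_univ i)
  rw [hd, pow_mul]
  exact (hu i).pow d

theorem isOfFinOrder_of_pow_eq_pow_of_lt {M₀ : Type*} [MonoidWithZero M₀]
    [IsLeftCancelMulZero M₀] {y : M₀} (hy : y ≠ 0) {m n : ℕ} (hmn : m < n) (h : y ^ m = y ^ n) :
    IsOfFinOrder y := by
  refine isOfFinOrder_iff_pow_eq_one.2 ⟨n - m, Nat.sub_pos_of_lt hmn, ?_⟩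
  refine mul_left_cancel₀ (pow_ne_zero m hy) ?_
  rw [← pow_add, Nat.add_sub_cancel' hmn.le, mul_one, h]

theorem Set.Finite.isOfFinOrder_of_image_pow_subset {M₀ : Type*} [MonoidWithZero M₀]
    [IsLeftCancelMulZero M₀] {S : Set M₀} (hS : S.Finite) (h0 : 0 ∉ S) {p q : ℕ}
    (hp : 0 < p) (hpq : p < q) (himg : (· ^ q) '' S ⊆ (· ^ p) '' S) {x : M₀} (hx : x ∈ S) :
    IsOfFinOrder x := by
  have hiter : ∀ k, ∃ y ∈ S, y ^ p ^ k = x ^ q ^ k := by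
    intro k
    induction k with
    | zero => exact ⟨x, hx, by simp⟩
    | succ k ih =>
      obtain ⟨y, hy, hyx⟩ := ih
      obtain ⟨z, hz, hzy⟩ := himg ⟨y, hy, rfl⟩
      refine ⟨z, hz, ?_⟩
      simp only at hzy
      rw [pow_succ', pow_mul, hzy, ← pow_mul, mul_comm, pow_mul, hyx, ← pow_mul, ← pow_succ]
  choose y hyS hyx using hiter
  obtain ⟨a, b, hab, hyab⟩ := hS.exists_lt_map_eq_of_forall_mem hyS
  set c := y a
  have hc : c ^ (p ^ a * p ^ (b - a)) = c ^ (p ^ a * q ^ (b - a)) := by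
    calc c ^ (p ^ a * p ^ (b - a)) = x ^ q ^ b := by
          rw [← pow_add, Nat.add_sub_cancel' hab.le, hyab, hyx]
      _ = (x ^ q ^ a) ^ q ^ (b - a) := by rw [← pow_mul, ← pow_add, Nat.add_sub_cancel' hab.le]
      _ = c ^ (p ^ a * q ^ (b - a)) := by rw [← hyx, pow_mul]
  have hlt : p ^ a * p ^ (b - a) < p ^ a * q ^ (b - a) :=
    Nat.mul_lt_mul_of_pos_left (Nat.pow_lt_pow_left hpq (Nat.sub_pos_of_lt hab).ne')
      (Nat.pow_pos hp)
  have hcfin := isOfFinOrder_of_pow_eq_pow_of_lt (fun h => h0 (h ▸ hyS a)) hlt hc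
  exact (hyx a ▸ hcfin.pow).of_pow (pow_pos (hp.trans hpq) a).ne'

theorem Set.Finite.exists_pow_eq_one_of_isOfFinOrder {M : Type*} [Monoid M] {S : Set M}
    (hS : S.Finite) (h : ∀ x ∈ S, IsOfFinOrder x) : ∃ s : ℕ, 1 ≤ s ∧ ∀ x ∈ S, x ^ s = 1 := by
  refine ⟨∏ x ∈ hS.toFinset, orderOf x,
    Finset.one_le_prod' fun x hx => (h x (hS.mem_toFinset.1 hx)).orderOf_pos, fun x hx => ?_⟩
  exact orderOf_dvd_iff_pow_eq_one.1 (Finset.dvd_prod_of_mem _ (hS.mem_toFinset.2 hx))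

theorem Matrix.isNilpotent_of_spectrum_subset_zero {n K : Type*} [Fintype n] [DecidableEq n]
    [Field K] [IsAlgClosed K] {A : Matrix n n K} (h : spectrum K A ⊆ {0}) : IsNilpotent A := by
  have hroots : A.charpoly.roots = Multiset.replicate (Multiset.card A.charpoly.roots) 0 :=
    Multiset.eq_replicate.2 ⟨rfl, fun r hr =>
      h (Matrix.mem_spectrum_iff_isRoot_charpoly.2 (isRoot_of_mem_roots hr))⟩
  have hX : A.charpoly = X ^ Multiset.card A.charpoly.roots := by
    rw [(IsAlgClosed.splits _).eq_prod_roots_of_monic A.charpoly_monic, hroots]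
    simp
  have hCH := A.aeval_self_charpoly
  rw [hX, map_pow, aeval_X] at hCH
  exact ⟨_, hCH⟩

theorem Matrix.isQuasiUnipotent_of_isConj_pow_of_isAlgClosed {n K : Type*} [Fintype n]
    [DecidableEq n] [Field K] [IsAlgClosed K] {A : Matrix n n K} (hA : IsUnit A) {p q : ℕ}
    (hp : 0 < p) (hpq : p < q) (h : IsConj (A ^ q) (A ^ p)) : IsQuasiUnipotent A := by
  have hS := A.finite_spectrum
  have h0 : (0 : K) ∉ spectrum K A := (spectrum.zero_notMem_iff K).2 hA
  have himg : (· ^ q) '' spectrum K A ⊆ (· ^ p) '' spectrum K A := by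
    rw [← spectrum.map_pow_of_pos A (hp.trans hpq), ← spectrum.map_pow_of_pos A hp,
      h.spectrum_eq]
  obtain ⟨s, hs, hroots⟩ := hS.exists_pow_eq_one_of_isOfFinOrder fun x hx =>
    hS.isOfFinOrder_of_image_pow_subset h0 hp hpq himg hx
  refine ⟨s, hs, Matrix.isNilpotent_of_spectrum_subset_zero ?_⟩
  have hdeg : 0 < (X ^ s - C 1 : K[X]).degree := by
    rw [degree_X_pow_sub_C hs]
    exact_mod_cast hs
  have hspec := spectrum.map_polynomial_aeval_of_degree_pos A _ hdeg
  rw [map_sub, map_pow, aeval_X, aeval_C, map_one] at hspec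
  rw [hspec]
  rintro _ ⟨x, hx, rfl⟩
  simp [hroots x hx]

theorem Matrix.isQuasiUnipotent_of_isConj_pow {n F : Type*} [Fintype n] [DecidableEq n]
    [Field F] {A : Matrix n n F} (hA : IsUnit A) {p q : ℕ} (hp : 0 < p) (hpq : p < q)
    (h : IsConj (A ^ q) (A ^ p)) : IsQuasiUnipotent A := by
  let f := (algebraMap F (AlgebraicClosure F)).mapMatrix (m := n)
  refine IsQuasiUnipotent.of_map (f := f) (Matrix.map_injective (algebraMap F _).injective) ?_
  refine isQuasiUnipotent_of_isConj_pow_of_isAlgClosed (hA.map f) hp hpq ?_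
  rw [← map_pow, ← map_pow]
  exact (f : Matrix n n F →* Matrix n n (AlgebraicClosure F)).map_isConj h

theorem quasi_unipotent_of_conjugate_powers_general
    {h : ℕ} (F : Fin h → Type*) [∀ i, Field (F i)]
    (n : Fin h → ℕ)
    (M : ∀ i, Matrix (Fin (n i)) (Fin (n i)) (F i))
    (hM : IsUnit M) :
    -- (i)
    ((∃ p q : ℕ, 0 < p ∧ p < q ∧
        ∃ U : (∀ i, Matrix (Fin (n i)) (Fin (n i)) (F i))ˣ,
          M ^ p = (U : ∀ i, Matrix (Fin (n i)) (Fin (n i)) (F i)) * M ^ q * (↑U⁻¹)) →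
      ∃ s : ℕ, 1 ≤ s ∧ IsNilpotent (M ^ s - 1)) ∧
    -- (ii)
    ((∀ p : ℕ, 1 ≤ p →
        ∃ U : (∀ i, Matrix (Fin (n i)) (Fin (n i)) (F i))ˣ,
          M = (U : ∀ i, Matrix (Fin (n i)) (Fin (n i)) (F i)) * M ^ p * (↑U⁻¹)) →
      IsNilpotent (M - 1)) := by
  have quasi_unipotent {p q : ℕ} (hp : 0 < p) (hpq : p < q) (hconj : IsConj (M ^ q) (M ^ p)) :
      IsQuasiUnipotent M :=
    Pi.isQuasiUnipotent_of_forall fun i =>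
      Matrix.isQuasiUnipotent_of_isConj_pow (hM.map (Pi.evalMonoidHom _ i)) hp hpq
        ((Pi.evalMonoidHom _ i).map_isConj hconj)
  refine ⟨fun ⟨p, q, hp, hpq, U, hU⟩ => quasi_unipotent hp hpq (isConj_of_eq_units_conj U hU),
    fun hall => ?_⟩
  obtain ⟨U, hU⟩ := hall 2 one_le_two
  obtain ⟨s, hs, hMs⟩ :=
    quasi_unipotent one_pos one_lt_two (isConj_of_eq_units_conj U (by rwa [pow_one]))
  obtain ⟨V, hV⟩ := hall s hs
  exact hMs.of_isConj (isConj_of_eq_units_conj V hV)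

theorem quasi_unipotent_of_conjugate_powers
    {h : ℕ} (F : Fin h → Type*) [∀ i, Field (F i)] [∀ i, CharZero (F i)]
    (n : Fin h → ℕ) (hn : ∀ i, 0 < n i)
    (M : ∀ i, Matrix (Fin (n i)) (Fin (n i)) (F i))
    (hM : IsUnit M) :
    -- (i)
    ((∃ p q : ℕ, 0 < p ∧ p < q ∧
        ∃ U : (∀ i, Matrix (Fin (n i)) (Fin (n i)) (F i))ˣ,
          M ^ p = (U : ∀ i, Matrix (Fin (n i)) (Fin (n i)) (F i)) * M ^ q * (↑U⁻¹)) →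
      ∃ s : ℕ, 1 ≤ s ∧ IsNilpotent (M ^ s - 1)) ∧
    -- (ii)
    ((∀ p : ℕ, 1 ≤ p →
        ∃ U : (∀ i, Matrix (Fin (n i)) (Fin (n i)) (F i))ˣ,
          M = (U : ∀ i, Matrix (Fin (n i)) (Fin (n i)) (F i)) * M ^ p * (↑U⁻¹)) →
      IsNilpotent (M - 1)) :=
  quasi_unipotent_of_conjugate_powers_general F n M hM
end

section
/- Let K be a field, n ≥ 1, let λ_1, …, λ_n be nonzero elements of K, let τ be a permutation of {1, …, n}, and let 0 < p < q be integers such that λ_i^p = λ_{τ(i)}^q for all i. Then, setting w = n!, one has λ_i^{q^w − p^w} = 1 for every i; in particular each λ_i is a root of unity. -/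
/-!
STATEMENT 17: Let `K` be a field, `n ≥ 1`, `λ_1, …, λ_n` nonzero elements of `K`, `τ` a
permutation of `{1, …, n}`, and `0 < p < q` integers with `λ_i^p = λ_{τ(i)}^q` for all
`i`.  Then with `w = n!` one has `λ_i^{q^w − p^w} = 1` for every `i`; in particular
each `λ_i` is a root of unity.
-/

theorem eigenvalues_roots_of_unity
    {K : Type*} [Field K] {n : ℕ} (hn : 1 ≤ n)
    (lam : Fin n → K) (hlam : ∀ i, lam i ≠ 0)
    (τ : Equiv.Perm (Fin n))
    (p q : ℕ) (hp : 0 < p) (hpq : p < q)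
    (h : ∀ i, lam i ^ p = lam (τ i) ^ q) :
    ∀ i, lam i ^ (q ^ n.factorial - p ^ n.factorial) = 1 ∧
      ∃ m : ℕ, 0 < m ∧ lam i ^ m = 1 := by
  have key : ∀ (k : ℕ) (i : Fin n), lam i ^ p ^ k = lam ((τ ^ k) i) ^ q ^ k := by
    intro k
    induction k with
    | zero => intro i; simp
    | succ k ih =>
      intro i
      calc lam i ^ p ^ (k + 1) = (lam i ^ p ^ k) ^ p := by
            rw [← pow_mul, pow_succ]
        _ = (lam ((τ ^ k) i) ^ q ^ k) ^ p := by rw [ih]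
        _ = (lam ((τ ^ k) i) ^ p) ^ q ^ k := by rw [← pow_mul, ← pow_mul, mul_comm]
        _ = (lam (τ ((τ ^ k) i)) ^ q) ^ q ^ k := by rw [h]
        _ = lam ((τ ^ (k + 1)) i) ^ q ^ (k + 1) := by
            rw [← pow_mul, ← pow_succ']
            congr 1
            rw [pow_succ', Equiv.Perm.mul_apply]
  set w := n.factorial with hw
  have hτ : τ ^ w = 1 := by
    have hc : Fintype.card (Equiv.Perm (Fin n)) = w := by
      rw [Fintype.card_perm, Fintype.card_fin]
    rw [← hc]
    exact pow_card_eq_one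
  have heq : ∀ i, lam i ^ p ^ w = lam i ^ q ^ w := by
    intro i
    have := key w i
    rwa [hτ, Equiv.Perm.one_apply] at this
  have hwpos : 0 < w := n.factorial_pos
  have hle : p ^ w ≤ q ^ w := Nat.pow_le_pow_left hpq.le w
  have hlt : p ^ w < q ^ w := Nat.pow_lt_pow_left hpq hwpos.ne'
  intro i
  have h1 : lam i ^ (q ^ w - p ^ w) = 1 := by
    rw [pow_sub₀ _ (hlam i) hle, ← heq i, mul_inv_cancel₀ (pow_ne_zero _ (hlam i))]
  exact ⟨h1, q ^ w - p ^ w, Nat.sub_pos_of_lt hlt, h1⟩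
end
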